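/- arXiv:1208.1814 — 4 statements merged into one kernel-verified Lean document; each statement's English description precedes it below -/
import Mathlib

section
/- For every positive integer n, the rank number of the path graph P_n equals ⌊log₂(n)⌋ + 1. -/
open SimpleGraph

/-- `f` is a vertex `k`-ranking of `G`: labels lie in `{1,...,k}` and every path
between two distinct vertices with the same label contains a vertex with a larger label. -/
def IsRanking {V : Type*} (G : SimpleGraph V) (k : ℕ) (f : V → ℕ) : Prop :=
  (∀ v, 1 ≤ f v ∧ f v ≤ k) ∧
  ∀ u v : V, u ≠ v → f u = f v →
    ∀ p : G.Walk u v, p.IsPath → ∃ w ∈ p.support, f u < f w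

/-- The rank number `χ_r(G)`: the least `k` admitting a `k`-ranking. -/
noncomputable def rankNumber {V : Type*} (G : SimpleGraph V) : ℕ :=
  sInf {k | ∃ f : V → ℕ, IsRanking G k f}

/-- The `m × n` grid graph `G_{m,n} = P_m □ P_n`. -/
def gridGraph (m n : ℕ) : SimpleGraph (Fin m × Fin n) :=
  (pathGraph m) □ (pathGraph n)

/-- Any walk in the path graph passes through every index between its endpoints. -/
lemma walk_support_interval {n : ℕ} {u v : Fin n} (p : (pathGraph n).Walk u v) :
    ∀ m : ℕ, min u.val v.val ≤ m → m ≤ max u.val v.val → ∃ w ∈ p.support, w.val = m := by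
  induction p with
  | @nil u =>
    intro m h1 h2
    exact ⟨u, by simp, by omega⟩
  | @cons u x v h q ih =>
    intro m h1 h2
    rcases eq_or_ne m u.val with rfl | hne
    · exact ⟨u, by simp, rfl⟩
    · rcases pathGraph_adj.mp h with h' | h' <;>
      · obtain ⟨w, hw, hwv⟩ := ih m (by omega) (by omega)
        exact ⟨w, by simp [hw], hwv⟩

/-- Restriction of a ranking to a consecutive block of a path is a ranking of a shorter path. -/
lemma restrict_ranking {n : ℕ} (a c k' : ℕ) (hca : c + a ≤ n) (f : Fin n → ℕ)
    (hf : ∀ u v : Fin n, u ≠ v → f u = f v →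
      ∀ p : (pathGraph n).Walk u v, p.IsPath → ∃ w ∈ p.support, f u < f w)
    (hb : ∀ i : Fin a, 1 ≤ f ⟨c + i.val, by omega⟩ ∧ f ⟨c + i.val, by omega⟩ ≤ k') :
    IsRanking (pathGraph a) k' (fun i => f ⟨c + i.val, by omega⟩) := by
  have hadj : ∀ x y : Fin a, (pathGraph a).Adj x y →
      (pathGraph n).Adj ⟨c + x.val, by omega⟩ ⟨c + y.val, by omega⟩ := by
    intro x y hxy
    rw [pathGraph_adj] at hxy ⊢
    simp only at hxy ⊢
    omega
  refine ⟨hb, ?_⟩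
  intro u v huv heq p hp
  let φ : pathGraph a →g pathGraph n := ⟨fun i => ⟨c + i.val, by omega⟩, fun h => hadj _ _ h⟩
  have hinj : Function.Injective φ := by
    intro x y hxy
    have : c + x.val = c + y.val := congrArg Fin.val hxy
    exact Fin.ext (by omega)
  have hne : φ u ≠ φ v := fun h => huv (hinj h)
  obtain ⟨w, hw, hlt⟩ := hf (φ u) (φ v) hne heq (p.map φ)
    (p.map_isPath_of_injective hinj hp)
  rw [SimpleGraph.Walk.support_map, List.mem_map] at hw
  obtain ⟨w', hw', rfl⟩ := hw
  exact ⟨w', hw', hlt⟩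

/-- If the path on `n` vertices admits a `k`-ranking, then `n < 2 ^ k`. -/
lemma lt_two_pow_of_ranking : ∀ n k : ℕ, ∀ f : Fin n → ℕ,
    IsRanking (pathGraph n) k f → n < 2 ^ k := by
  intro n
  induction n using Nat.strong_induction_on with
  | _ n ih =>
    intro k f hf
    rcases Nat.eq_zero_or_pos n with rfl | hn
    · positivity
    · have hne : Nonempty (Fin n) := ⟨⟨0, hn⟩⟩
      obtain ⟨m, hm⟩ := Finite.exists_max f
      -- the maximum label is attained at a unique vertex
      have huniq : ∀ v : Fin n, f v = f m → v = m := by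
        intro v hv
        by_contra hvm
        obtain ⟨q⟩ := pathGraph_preconnected n v m
        obtain ⟨w, _, hw⟩ := hf.2 v m hvm hv q.toPath.1 q.toPath.2
        have := hm w
        omega
      have hMk : f m ≤ k := (hf.1 m).2
      have hM1 : 1 ≤ f m := (hf.1 m).1
      set a : ℕ := m.val with ha
      have ham : a < n := m.isLt
      set b : ℕ := n - 1 - a with hb
      -- left part
      have hL : IsRanking (pathGraph a) (k - 1) (fun i => f ⟨0 + i.val, by omega⟩) := by
        refine restrict_ranking a 0 (k - 1) (by omega) f hf.2 ?_
        intro i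
        have h1 := (hf.1 ⟨0 + i.val, by omega⟩).1
        have h2 := hm ⟨0 + i.val, by omega⟩
        have h3 : f ⟨0 + i.val, by omega⟩ ≠ f m := by
          intro h
          have := huniq _ h
          have : (0 : ℕ) + i.val = a := congrArg Fin.val this
          omega
        exact ⟨h1, by omega⟩
      -- right part
      have hR : IsRanking (pathGraph b) (k - 1) (fun i => f ⟨a + 1 + i.val, by omega⟩) := by
        refine restrict_ranking b (a + 1) (k - 1) (by omega) f hf.2 ?_
        intro i
        have h1 := (hf.1 ⟨a + 1 + i.val, by omega⟩).1
        have h2 := hm ⟨a + 1 + i.val, by omega⟩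
        have h3 : f ⟨a + 1 + i.val, by omega⟩ ≠ f m := by
          intro h
          have := huniq _ h
          have : a + 1 + i.val = a := congrArg Fin.val this
          omega
        exact ⟨h1, by omega⟩
      have hal := ih a (by omega) (k - 1) _ hL
      have hbl := ih b (by omega) (k - 1) _ hR
      have hk1 : 1 ≤ k := le_trans hM1 hMk
      have hpow : 2 ^ (k - 1) * 2 = 2 ^ k := by
        have h : k - 1 + 1 = k := by omega
        rw [← pow_succ, h]
      omega

/-- The explicit optimal ranking of a path: label `i` by `ν₂(i+1) + 1`. -/
lemma upper_ranking (n : ℕ) (hn : 1 ≤ n) :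
    IsRanking (pathGraph n) (Nat.log 2 n + 1)
      (fun i : Fin n => padicValNat 2 (i.val + 1) + 1) := by
  constructor
  · intro v
    show 1 ≤ padicValNat 2 (v.val + 1) + 1 ∧
      padicValNat 2 (v.val + 1) + 1 ≤ Nat.log 2 n + 1
    refine ⟨by omega, ?_⟩
    have hd : (2 : ℕ) ^ padicValNat 2 (v.val + 1) ∣ v.val + 1 := pow_padicValNat_dvd
    have hle : 2 ^ padicValNat 2 (v.val + 1) ≤ n :=
      le_trans (Nat.le_of_dvd (by omega) hd) (by omega)
    have := (Nat.le_log_iff_pow_le (by norm_num) (by omega)).mpr hle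
    omega
  · intro u v huv heq p hp
    simp only at heq
    set t : ℕ := padicValNat 2 (u.val + 1) with ht
    have htv : padicValNat 2 (v.val + 1) = t := by omega
    set s : ℕ := min u.val v.val with hs
    set M : ℕ := max u.val v.val with hM
    have hsM : s < M := by
      rcases lt_or_gt_of_ne (fun h : u.val = v.val => huv (Fin.ext h)) with h | h <;> omega
    have hts : padicValNat 2 (s + 1) = t := by
      rcases min_choice u.val v.val with h | h <;> rw [hs, h] <;> omega
    have htM : padicValNat 2 (M + 1) = t := by
      rcases max_choice u.val v.val with h | h <;> rw [hM, h] <;> omega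
    haveI : Fact (Nat.Prime 2) := ⟨Nat.prime_two⟩
    -- 2^t divides both s+1 and M+1
    have hds : (2 : ℕ) ^ t ∣ s + 1 := by rw [← hts]; exact pow_padicValNat_dvd
    have hdM : (2 : ℕ) ^ t ∣ M + 1 := by rw [← htM]; exact pow_padicValNat_dvd
    have hnds : ¬ (2 : ℕ) ^ (t + 1) ∣ s + 1 := by
      have := pow_succ_padicValNat_not_dvd (p := 2) (n := s + 1) (by omega)
      rwa [hts] at this
    -- the odd part of s+1
    obtain ⟨q, hq⟩ := hds
    have hqodd : ¬ 2 ∣ q := by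
      rintro ⟨r, rfl⟩
      exact hnds ⟨r, by rw [hq, pow_succ]; ring⟩
    obtain ⟨r, hr⟩ : 2 ∣ q + 1 := by omega
    -- x := s + 1 + 2^t is divisible by 2^(t+1) and ≤ M + 1
    have hx : s + 1 + 2 ^ t = 2 ^ (t + 1) * r := by
      calc s + 1 + 2 ^ t = 2 ^ t * (q + 1) := by rw [hq]; ring
        _ = 2 ^ t * (2 * r) := by rw [hr]
        _ = 2 ^ (t + 1) * r := by rw [pow_succ]; ring
    have hdiff : (2 : ℕ) ^ t ∣ (M + 1) - (s + 1) := Nat.dvd_sub hdM ⟨q, hq⟩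
    have hge : 2 ^ t ≤ (M + 1) - (s + 1) := Nat.le_of_dvd (by omega) hdiff
    have hxle : s + 1 + 2 ^ t ≤ M + 1 := by omega
    -- find the vertex at index s + 2^t
    obtain ⟨w, hw, hwv⟩ := walk_support_interval p (s + 2 ^ t)
      (by have : 1 ≤ 2 ^ t := Nat.one_le_two_pow; omega) (by omega)
    refine ⟨w, hw, ?_⟩
    have hwx : w.val + 1 = 2 ^ (t + 1) * r := by rw [hwv]; omega
    have hrd : (2 : ℕ) ^ (t + 1) ∣ w.val + 1 := ⟨r, hwx⟩
    have : t + 1 ≤ padicValNat 2 (w.val + 1) :=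
      (padicValNat_dvd_iff_le (by omega)).mp hrd
    simp only
    omega

theorem rank_pathGraph (n : ℕ) (hn : 1 ≤ n) :
    rankNumber (pathGraph n) = Nat.log 2 n + 1 := by
  have hmem : Nat.log 2 n + 1 ∈ {k | ∃ f : Fin n → ℕ, IsRanking (pathGraph n) k f} :=
    ⟨_, upper_ranking n hn⟩
  refine le_antisymm (Nat.sInf_le hmem) (le_csInf ⟨_, hmem⟩ ?_)
  rintro k ⟨f, hf⟩
  have h1 : n < 2 ^ k := lt_two_pow_of_ranking n k f hf
  have h2 : Nat.log 2 n < k := Nat.log_lt_of_lt_pow (by omega) h1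
  omega
end

section
/- For every positive integer n, the rank number of the path graph satisfies χ_r(P_n) = 1 + χ_r(P_⌈(n-1)/2⌉) when n ≥ 2. -/
open SimpleGraph

/-- Combinatorial reformulation of rankings of paths. -/
def Rk (n k : ℕ) : Prop :=
  ∃ f : Fin n → ℕ, (∀ v, 1 ≤ f v ∧ f v ≤ k) ∧
    ∀ i j : Fin n, i.val < j.val → f i = f j →
      ∃ w : Fin n, i.val < w.val ∧ w.val < j.val ∧ f i < f w

/-- Any walk in a path graph passes through all intermediate vertices. -/
lemma mem_support_of_between {n : ℕ} {u v : Fin n} (p : (pathGraph n).Walk u v)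
    (w : Fin n) (h1 : u.val ≤ w.val) (h2 : w.val ≤ v.val) : w ∈ p.support := by
  induction p with
  | nil =>
      simp only [SimpleGraph.Walk.support_nil, List.mem_singleton]
      exact Fin.ext (by omega)
  | @cons a x b hadj q ih =>
      by_cases hw : w = a
      · simp [hw]
      · have haw : a.val < w.val := lt_of_le_of_ne h1 (fun h => hw (Fin.ext h.symm))
        have hx : x.val ≤ w.val := by
          rcases pathGraph_adj.mp hadj with h | h <;> omega
        simp [ih hx h2]

/-- There is a monotone path between any two comparable vertices of a path graph. -/
lemma exists_up_walk {n : ℕ} (i j : Fin n) (h : i.val ≤ j.val) :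
    ∃ p : (pathGraph n).Walk i j, p.IsPath ∧
      ∀ w ∈ p.support, i.val ≤ w.val ∧ w.val ≤ j.val := by
  obtain ⟨d, hd⟩ : ∃ d, j.val - i.val = d := ⟨_, rfl⟩
  induction d generalizing i with
  | zero =>
      have : i = j := Fin.ext (by omega)
      subst this
      exact ⟨SimpleGraph.Walk.nil, by simp, by simp⟩
  | succ d ih =>
      have hij : i.val < j.val := by omega
      set i' : Fin n := ⟨i.val + 1, by omega⟩ with hi'
      have hadj : (pathGraph n).Adj i i' := pathGraph_adj.mpr (Or.inl rfl)
      obtain ⟨p, hp, hsup⟩ := ih i' (by simp [hi']; omega) (by simp [hi']; omega)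
      refine ⟨SimpleGraph.Walk.cons hadj p, ?_, ?_⟩
      · rw [SimpleGraph.Walk.cons_isPath_iff]
        refine ⟨hp, fun hmem => ?_⟩
        have := (hsup i hmem).1
        simp [hi'] at this
      · intro w hw
        rw [SimpleGraph.Walk.support_cons] at hw
        rcases List.mem_cons.mp hw with h | h
        · subst h; omega
        · have := hsup w h
          simp [hi'] at this
          omega

lemma ranking_iff (n k : ℕ) (f : Fin n → ℕ) :
    IsRanking (pathGraph n) k f ↔
      ((∀ v, 1 ≤ f v ∧ f v ≤ k) ∧
        ∀ i j : Fin n, i.val < j.val → f i = f j →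
          ∃ w : Fin n, i.val < w.val ∧ w.val < j.val ∧ f i < f w) := by
  constructor
  · rintro ⟨hb, hr⟩
    refine ⟨hb, fun i j hij hf => ?_⟩
    obtain ⟨p, hp, hsup⟩ := exists_up_walk i j (le_of_lt hij)
    have hne : i ≠ j := fun h => by simp [h] at hij
    obtain ⟨w, hw, hfw⟩ := hr i j hne hf p hp
    obtain ⟨h1, h2⟩ := hsup w hw
    have hwi : w.val ≠ i.val := fun h => by
      have : w = i := Fin.ext h
      subst this; omega
    have hwj : w.val ≠ j.val := fun h => by
      have : w = j := Fin.ext h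
      subst this; omega
    exact ⟨w, by omega, by omega, hfw⟩
  · rintro ⟨hb, hr⟩
    refine ⟨hb, fun u v huv hf p _ => ?_⟩
    rcases lt_trichotomy u.val v.val with h | h | h
    · obtain ⟨w, h1, h2, h3⟩ := hr u v h hf
      exact ⟨w, mem_support_of_between p w (le_of_lt h1) (le_of_lt h2), h3⟩
    · exact absurd (Fin.ext h) huv
    · obtain ⟨w, h1, h2, h3⟩ := hr v u h hf.symm
      have : w ∈ p.reverse.support :=
        mem_support_of_between p.reverse w (le_of_lt h1) (le_of_lt h2)
      rw [SimpleGraph.Walk.support_reverse, List.mem_reverse] at this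
      exact ⟨w, this, hf ▸ h3⟩

lemma rankSet_eq (n : ℕ) :
    {k | ∃ f : Fin n → ℕ, IsRanking (pathGraph n) k f} = {k | Rk n k} := by
  ext k
  simp only [Set.mem_setOf_eq, Rk]
  constructor
  · rintro ⟨f, hf⟩; exact ⟨f, (ranking_iff n k f).mp hf⟩
  · rintro ⟨f, hf⟩; exact ⟨f, (ranking_iff n k f).mpr hf⟩

lemma Rk_mono {n k k' : ℕ} (h : Rk n k) (hk : k ≤ k') : Rk n k' := by
  obtain ⟨f, hb, hr⟩ := h
  exact ⟨f, fun v => ⟨(hb v).1, le_trans (hb v).2 hk⟩, hr⟩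

lemma Rk_self (n : ℕ) : Rk n n := by
  refine ⟨fun i => i.val + 1, fun v => ?_, fun i j hij hf => ?_⟩
  · have := v.isLt; dsimp only; omega
  · dsimp only at hf; omega

/-- Upper bound: from a ranking of `P_m` build a ranking of `P_n` for `n ≤ 2m+1`. -/
lemma Rk_up {m k : ℕ} (h : Rk m k) (n : ℕ) (hn : n ≤ 2 * m + 1) : Rk n (k + 1) := by
  obtain ⟨g, hgb, hgr⟩ := h
  set f : Fin n → ℕ := fun i =>
    if h : i.val % 2 = 1 then g ⟨i.val / 2, by have := i.isLt; omega⟩ + 1 else 1 with hfdef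
  have hfodd : ∀ i : Fin n, i.val % 2 = 1 →
      ∃ c : Fin m, 2 * c.val + 1 = i.val ∧ f i = g c + 1 := by
    intro i hi
    refine ⟨⟨i.val / 2, by have := i.isLt; omega⟩, by simp; omega, ?_⟩
    simp only [hfdef]
    rw [dif_pos hi]
  have hfeven : ∀ i : Fin n, i.val % 2 = 0 → f i = 1 := by
    intro i hi
    simp only [hfdef]
    rw [dif_neg (by omega)]
  refine ⟨f, ?_, ?_⟩
  · intro v
    rcases Nat.mod_two_eq_zero_or_one v.val with hv | hv
    · rw [hfeven v hv]; omega
    · obtain ⟨c, -, hc⟩ := hfodd v hv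
      rw [hc]
      have := hgb c
      omega
  · intro i j hij hf
    rcases Nat.mod_two_eq_zero_or_one i.val with hi | hi <;>
      rcases Nat.mod_two_eq_zero_or_one j.val with hj | hj
    · -- both even
      have hlt : i.val + 1 < j.val := by omega
      set w : Fin n := ⟨i.val + 1, by have := j.isLt; omega⟩ with hw
      obtain ⟨c, -, hc⟩ := hfodd w (by simp [hw]; omega)
      refine ⟨w, by simp [hw], by simp [hw]; omega, ?_⟩
      rw [hfeven i hi, hc]
      have := hgb c
      omega
    · -- i even, j odd
      exfalso
      obtain ⟨c, -, hc⟩ := hfodd j hj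
      rw [hfeven i hi, hc] at hf
      have := hgb c
      omega
    · -- i odd, j even
      exfalso
      obtain ⟨c, -, hc⟩ := hfodd i hi
      rw [hfeven j hj, hc] at hf
      have := hgb c
      omega
    · -- both odd
      obtain ⟨a, ha, hfa⟩ := hfodd i hi
      obtain ⟨b, hb', hfb⟩ := hfodd j hj
      have hgab : g a = g b := by rw [hfa, hfb] at hf; omega
      obtain ⟨c, hc1, hc2, hc3⟩ := hgr a b (by omega) hgab
      set w : Fin n := ⟨2 * c.val + 1, by have := j.isLt; omega⟩ with hw
      obtain ⟨c', hc', hfc'⟩ := hfodd w (by simp [hw])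
      have hcc : c' = c := Fin.ext (by simp [hw] at hc'; omega)
      refine ⟨w, by simp [hw]; omega, by simp [hw]; omega, ?_⟩
      rw [hfa, hfc', hcc]
      omega

/-- Lower bound: a ranking of `P_n` yields a ranking of `P_{⌊n/2⌋}` with one fewer label. -/
lemma Rk_down {n k : ℕ} (hn : 2 ≤ n) (h : Rk n k) : 2 ≤ k ∧ Rk (n / 2) (k - 1) := by
  obtain ⟨f, hb, hr⟩ := h
  set m := n / 2 with hm
  obtain ⟨p, -, hp⟩ := Finset.exists_max_image Finset.univ f
    ⟨⟨0, by omega⟩, Finset.mem_univ _⟩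
  have hpmax : ∀ q, f q ≤ f p := fun q => hp q (Finset.mem_univ q)
  have huniq : ∀ q, f q = f p → q = p := by
    intro q hq
    by_contra hne
    rcases lt_trichotomy q.val p.val with hlt | heq | hgt
    · obtain ⟨w, -, -, hw⟩ := hr q p hlt hq
      have := hpmax w; omega
    · exact hne (Fin.ext heq)
    · obtain ⟨w, -, -, hw⟩ := hr p q hgt hq.symm
      have := hpmax w; omega
  have hk2 : 2 ≤ k := by
    have h0 := hb ⟨0, by omega⟩
    have h1 := hb ⟨1, by omega⟩
    by_cases heq : f ⟨0, by omega⟩ = f ⟨1, by omega⟩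
    · obtain ⟨w, hw1, hw2, -⟩ := hr ⟨0, by omega⟩ ⟨1, by omega⟩ (by simp) heq
      simp only [Fin.val_mk] at hw1 hw2
      omega
    · omega
  refine ⟨hk2, ?_⟩
  set o : ℕ := if m ≤ p.val then 0 else p.val + 1 with ho
  have hom : o + m ≤ n := by
    have := p.isLt
    by_cases hc : m ≤ p.val <;> simp only [ho, hc, if_true, if_false] <;> omega
  have hop : ∀ i, i < m → o + i ≠ p.val := by
    intro i hi
    by_cases hc : m ≤ p.val <;> simp only [ho, hc, if_true, if_false] <;> omega
  set e : Fin m → Fin n := fun i => ⟨o + i.val, by have := i.isLt; omega⟩ with he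
  have heval : ∀ i : Fin m, (e i).val = o + i.val := fun i => rfl
  refine ⟨fun i => f (e i), ?_, ?_⟩
  · intro v
    dsimp only
    have hne : e v ≠ p := fun h => hop v.val v.isLt (by rw [← h, heval])
    have h1 : f (e v) ≠ f p := fun h => hne (huniq (e v) h)
    have h2 := hpmax (e v)
    have h3 := (hb p).2
    have h4 := (hb (e v)).1
    omega
  · intro i j hij hf
    dsimp only at hf ⊢
    obtain ⟨w, hw1, hw2, hw3⟩ := hr (e i) (e j) (by rw [heval, heval]; omega) hf
    rw [heval] at hw1
    rw [heval] at hw2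
    have hwm : w.val - o < m := by have := j.isLt; omega
    refine ⟨⟨w.val - o, hwm⟩, by simp; omega, by simp; omega, ?_⟩
    have hew : e ⟨w.val - o, hwm⟩ = w := Fin.ext (by rw [heval]; simp; omega)
    rw [hew]
    exact hw3

theorem rank_pathGraph_rec (n : ℕ) (hn : 2 ≤ n) :
    rankNumber (pathGraph n) = 1 + rankNumber (pathGraph ((n - 1 + 1) / 2)) := by
  have hn1 : n - 1 + 1 = n := by omega
  rw [hn1]
  set m := n / 2 with hm
  have hrn : rankNumber (pathGraph n) = sInf {k | Rk n k} := by
    unfold rankNumber; rw [rankSet_eq]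
  have hrm : rankNumber (pathGraph m) = sInf {k | Rk m k} := by
    unfold rankNumber; rw [rankSet_eq]
  rw [hrn, hrm]
  have hne1 : {k | Rk n k}.Nonempty := ⟨n, Set.mem_setOf_eq ▸ Rk_self n⟩
  have hne2 : {k | Rk m k}.Nonempty := ⟨m, Set.mem_setOf_eq ▸ Rk_self m⟩
  have ha : Rk n (sInf {k | Rk n k}) := Nat.sInf_mem hne1
  have hb : Rk m (sInf {k | Rk m k}) := Nat.sInf_mem hne2
  obtain ⟨h2, hdown⟩ := Rk_down hn ha
  have hle1 : sInf {k | Rk m k} ≤ sInf {k | Rk n k} - 1 :=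
    Nat.sInf_le (Set.mem_setOf_eq ▸ hdown)
  have hup : Rk n (sInf {k | Rk m k} + 1) := Rk_up hb n (by omega)
  have hle2 : sInf {k | Rk n k} ≤ sInf {k | Rk m k} + 1 :=
    Nat.sInf_le (Set.mem_setOf_eq ▸ hup)
  omega
end

section
/- The rank number of the 4×5 grid graph G_{4,5} is 8. -/
open SimpleGraph
set_option maxHeartbeats 8000000
set_option maxRecDepth 100000


-- ===== auxiliary =====
abbrev Vg := Fin 4 × Fin 5
abbrev Gg := gridGraph 4 5

instance instAdjDec : DecidableRel (gridGraph 4 5).Adj := fun a b =>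
  decidable_of_iff ((a.2 = b.2 ∧ ((a.1:ℕ)+1 = b.1 ∨ (b.1:ℕ)+1 = a.1)) ∨
      (a.1 = b.1 ∧ ((a.2:ℕ)+1 = b.2 ∨ (b.2:ℕ)+1 = a.2))) (by
    rw [gridGraph, boxProd_adj, pathGraph_adj, pathGraph_adj]; tauto)

def enc (v : Vg) : ℕ := 5 * v.1.val + v.2.val

lemma enc_inj : Function.Injective enc := by decide

def toSet (m : ℕ) : Finset Vg := Finset.univ.filter fun v => m.testBit (enc v)

lemma mem_toSet {m : ℕ} {v : Vg} : v ∈ toSet m ↔ m.testBit (enc v) = true := by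
  simp [toSet]


def dV (i : ℕ) : Vg := (⟨i / 5 % 4, Nat.mod_lt _ (by norm_num)⟩, ⟨i % 5, Nat.mod_lt _ (by norm_num)⟩)

lemma dV_enc : ∀ v : Vg, dV (enc v) = v := by decide

lemma enc_dV {x : ℕ} (h : x < 20) : enc (dV x) = x := by
  show 5 * (x / 5 % 4) + x % 5 = x
  omega

def maskOf (e : List ℕ) : ℕ := e.foldr (fun x m => 2 ^ x ||| m) 0

lemma mem_toSet_maskOf {e : List ℕ} {v : Vg} : v ∈ toSet (maskOf e) ↔ enc v ∈ e := by
  induction e with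
  | nil => simp [mem_toSet, maskOf]
  | cons x xs ih =>
    simp only [maskOf, List.foldr_cons] at *
    rw [mem_toSet, Nat.testBit_or, Nat.testBit_two_pow]
    rw [mem_toSet] at ih
    simp only [List.mem_cons, ← ih, Bool.or_eq_true, decide_eq_true_eq]
    constructor
    · rintro (h | h)
      · exact Or.inl h.symm
      · exact Or.inr h
    · rintro (h | h)
      · exact Or.inl h.symm
      · exact Or.inr h

lemma toSet_or (m₁ m₂ : ℕ) : toSet (m₁ ||| m₂) = toSet m₁ ∪ toSet m₂ := by
  ext w; simp [mem_toSet, Nat.testBit_or]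

lemma toSet_pow {x : ℕ} (h : x < 20) : toSet (2 ^ x) = {dV x} := by
  ext w
  rw [mem_toSet, Nat.testBit_two_pow, Finset.mem_singleton]
  simp only [decide_eq_true_eq]
  constructor
  · rintro rfl; exact (dV_enc w).symm
  · rintro rfl; exact (enc_dV h).symm

-- connectivity within a set

def Conn (A : Finset Vg) : Prop :=
  ∀ u ∈ A, ∀ v ∈ A, ∃ p : Gg.Walk u v, ∀ w ∈ p.support, w ∈ A

lemma conn_singleton (v : Vg) : Conn {v} := by
  intro u hu w hw
  simp only [Finset.mem_singleton] at hu hw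
  subst hu; subst hw
  exact ⟨Walk.nil, by simp⟩

lemma conn_insert {A : Finset Vg} {a s : Vg} (hA : Conn A) (hs : s ∈ A)
    (ha : Gg.Adj a s) : Conn (insert a A) := by
  intro u hu v hv
  rcases Finset.mem_insert.1 hu with hu' | hu' <;> rcases Finset.mem_insert.1 hv with hv' | hv'
  · subst hu'; subst hv'; exact ⟨Walk.nil, by simp⟩
  · subst hu'
    obtain ⟨p, hp⟩ := hA s hs v hv'
    exact ⟨Walk.cons ha p, by
      intro w hw
      rcases List.mem_cons.1 (Walk.support_cons _ _ ▸ hw) with h | h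
      · simp [h]
      · exact Finset.mem_insert_of_mem (hp w h)⟩
  · subst hv'
    obtain ⟨p, hp⟩ := hA s hs u hu'
    refine ⟨(Walk.cons ha p).reverse, ?_⟩
    intro w hw
    rw [Walk.support_reverse, List.mem_reverse] at hw
    rcases List.mem_cons.1 (Walk.support_cons _ _ ▸ hw) with h | h
    · simp [h]
    · exact Finset.mem_insert_of_mem (hp w h)
  · obtain ⟨p, hp⟩ := hA u hu' v hv'
    exact ⟨p, fun w hw => Finset.mem_insert_of_mem (hp w hw)⟩

-- hardness
def HardOn (A : Finset Vg) (b : ℕ) : Prop :=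
  ∀ (k : ℕ) (f : Vg → ℕ), IsRanking Gg k f → ∃ v ∈ A, b ≤ f v

lemma hardOn_base {A : Finset Vg} (h : A.Nonempty) : HardOn A 1 := by
  obtain ⟨v, hv⟩ := h
  exact fun k f hf => ⟨v, hv, (hf.1 v).1⟩

lemma unique_max {A : Finset Vg} (hA : Conn A) {k : ℕ} {f : Vg → ℕ}
    (hf : IsRanking Gg k f) {u v : Vg} (hu : u ∈ A) (hv : v ∈ A)
    (hne : u ≠ v) (heq : f u = f v) : ∃ w ∈ A, f u < f w := by
  obtain ⟨p, hp⟩ := hA u hu v hv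
  obtain ⟨w, hw, hlt⟩ := hf.2 u v hne heq p.bypass p.bypass_isPath
  exact ⟨w, hp w (p.support_bypass_subset hw), hlt⟩

lemma hardOn_step {A : Finset Vg} {b : ℕ} (hA : Conn A) (hne : A.Nonempty)
    (h : ∀ v ∈ A, ∃ C : Finset Vg, C ⊆ A.erase v ∧ HardOn C b) :
    HardOn A (b + 1) := by
  intro k f hf
  obtain ⟨v, hv, hmax⟩ := A.exists_max_image f hne
  obtain ⟨C, hC, hard⟩ := h v hv
  obtain ⟨w, hw, hbw⟩ := hard k f hf
  have hw' := hC hw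
  have hwA : w ∈ A := Finset.mem_of_mem_erase hw'
  have hwv : w ≠ v := Finset.ne_of_mem_erase hw'
  have hle : f w ≤ f v := hmax w hwA
  have hlt : f w < f v := by
    rcases lt_or_eq_of_le hle with h' | h'
    · exact h'
    · obtain ⟨x, hx, hx'⟩ := unique_max hA hf hwA hv hwv h'
      have := hmax x hx
      omega
  exact ⟨v, hv, by omega⟩


-- ===== Bool checkers =====
def cb (m : ℕ) : List ℕ → Bool
  | [] => true
  | x :: xs =>
    decide (x < 20) &&
    (decide (∃ s : Vg, Gg.Adj (dV x) s ∧ m.testBit (enc s) = true)) &&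
      cb (m ||| 2 ^ x) xs

def chk1 (pm : List ℕ) (m : ℕ) (x : ℕ) : Bool :=
  pm.any fun c => (c &&& m == c) && (c.testBit x == false)

def entryOk (pm : List ℕ) (e : List ℕ) : Bool :=
  match e with
  | [] => false
  | a :: xs => decide (a < 20) && cb (2 ^ a) xs && (e.all fun x => chk1 pm (maskOf e) x)

def levelOk (pm : List ℕ) (cur : List (List ℕ)) : Bool := cur.all (entryOk pm)

def GoodMasks (ms : List ℕ) (b : ℕ) : Prop :=
  ∀ m ∈ ms, Conn (toSet m) ∧ HardOn (toSet m) b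

-- cb soundness
lemma cb_sound : ∀ (l : List ℕ) (m : ℕ), cb m l = true → Conn (toSet m) →
    Conn (toSet (m ||| maskOf l)) := by
  intro l
  induction l with
  | nil => intro m _ hC; simpa [maskOf] using hC
  | cons x xs ih =>
    intro m hcb hC
    simp only [cb, Bool.and_eq_true, decide_eq_true_eq] at hcb
    obtain ⟨⟨hx20, s, hadj, hs⟩, hrest⟩ := hcb
    have hsA : s ∈ toSet m := mem_toSet.2 hs
    have h1 : Conn (toSet (m ||| 2 ^ x)) := by
      have : toSet (m ||| 2 ^ x) = insert (dV x) (toSet m) := by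
        rw [toSet_or, toSet_pow hx20]
        ext w; simp [Finset.mem_union, or_comm]
      rw [this]
      exact conn_insert hC hsA hadj
    have := ih (m ||| 2 ^ x) hrest h1
    have heq : m ||| 2 ^ x ||| maskOf xs = m ||| maskOf (x :: xs) := by
      show _ = m ||| (2 ^ x ||| maskOf xs)
      rw [Nat.or_assoc]
    rwa [heq] at this

lemma entry_sound {pm : List ℕ} {b : ℕ} (hpm : GoodMasks pm b) {e : List ℕ}
    (he : entryOk pm e = true) :
    Conn (toSet (maskOf e)) ∧ HardOn (toSet (maskOf e)) (b + 1) := by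
  match e with
  | [] => simp [entryOk] at he
  | a :: xs =>
    simp only [entryOk, Bool.and_eq_true, List.all_eq_true, decide_eq_true_eq] at he
    obtain ⟨⟨ha20, hcb⟩, hall⟩ := he
    have hconn : Conn (toSet (maskOf (a :: xs))) := by
      have := cb_sound xs (2 ^ a) hcb (by rw [toSet_pow ha20]; exact conn_singleton (dV a))
      have heq : (2:ℕ) ^ a ||| maskOf xs = maskOf (a :: xs) := rfl
      rwa [heq] at this
    have hnon : (toSet (maskOf (a :: xs))).Nonempty :=
      ⟨dV a, mem_toSet_maskOf.2 (by rw [enc_dV ha20]; simp)⟩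
    refine ⟨hconn, hardOn_step hconn hnon ?_⟩
    intro v hv
    have hvl : enc v ∈ a :: xs := mem_toSet_maskOf.1 hv
    have := hall (enc v) hvl
    simp only [chk1, List.any_eq_true, Bool.and_eq_true, beq_iff_eq] at this
    obtain ⟨c, hcmem, hsub, hbit⟩ := this
    refine ⟨toSet c, ?_, (hpm c hcmem).2⟩
    intro w hw
    have hwbit : c.testBit (enc w) = true := mem_toSet.1 hw
    have hwm : (maskOf (a :: xs)).testBit (enc w) = true := by
      have : (c &&& maskOf (a :: xs)).testBit (enc w) = true := by rw [hsub]; exact hwbit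
      rw [Nat.testBit_and] at this
      exact (Bool.and_eq_true _ _ ▸ this).2
    refine Finset.mem_erase.2 ⟨?_, mem_toSet.2 hwm⟩
    rintro rfl
    rw [hwbit] at hbit; simp at hbit

lemma level_sound {pm : List ℕ} {b : ℕ} (hpm : GoodMasks pm b)
    {cur : List (List ℕ)} (h : levelOk pm cur = true) :
    GoodMasks (cur.map maskOf) (b + 1) := by
  intro m hm
  obtain ⟨e, he, rfl⟩ := List.mem_map.1 hm
  exact entry_sound hpm ((List.all_eq_true.1 h) e he)

-- level 1
def allV : List Vg := (List.finRange 4).flatMap fun i => (List.finRange 5).map fun j => (i, j)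

lemma good1 : GoodMasks (allV.map fun v => 2 ^ (enc v)) 1 := by
  intro m hm
  obtain ⟨v, _, rfl⟩ := List.mem_map.1 hm
  have h20 : enc v < 20 := by revert v; decide
  rw [toSet_pow h20, dV_enc]
  exact ⟨conn_singleton v, hardOn_base ⟨v, Finset.mem_singleton_self v⟩⟩

def P2 : List (List ℕ) :=
 [[6,11],[12,13],[11,12],[12,17],[7,12],[8,13],[6,7],[7,8],[2,3],[17,18],[13,18],[5,10],[8,9],[18,19],[13,14],[16,17],[10,15],[1,2],[9,14],[11,16],[2,7],[14,19],[5,6],[4,9],[3,4],[10,11],[3,8],[0,5],[0,1],[1,6],[15,16]]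

def M2 : List ℕ := [2112,12288,6144,135168,4224,8448,192,384,12,393216,270336,1056,768,786432,24576,196608,33792,6,16896,67584,132,540672,96,528,24,3072,264,33,3,66,98304]

def P3 : List (List ℕ) :=
 [[14,19,18,17],[6,11,16,17],[8,13,12,17],[10,15,16,17],[7,8,13,18],[12,13,14,19],[12,17,18,19],[6,7,11,16],[8,13,18,19],[2,3,8,13],[7,8,12,11],[13,14,18,17],[5,6,10,15],[5,10,15,16],[16,17,18,19],[9,14,19,18],[8,9,14,19],[2,3,4,7],[7,8,12,17],[2,3,7,12],[8,9,13,12],[11,16,17,18],[13,14,18,19],[7,12,17,16],[6,11,10,15],[1,2,6,11],[2,3,4,9],[5,6,7,10],[11,12,13,16],[7,12,17,18],[2,7,6,11],[11,12,17,18],[12,13,17,16],[12,13,18,19],[13,18,17,16],[8,13,14,19],[7,8,13,14],[6,7,8,13],[1,2,3,8],[6,11,12,17],[7,12,13,18],[11,12,13,14],[11,12,13,18],[9,14,13,18],[4,9,14,19],[12,13,14,17],[4,9,8,13],[5,10,11,16],[0,5,10,11],[0,1,2,5],[15,16,17,18],[11,12,16,15],[5,6,7,8],[1,2,3,6],[2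,7,12,17],[10,11,12,15],[3,4,9,14],[11,12,16,17],[0,5,10,15],[1,2,7,8],[7,8,9,12],[2,3,7,6],[6,7,12,13],[3,4,8,7],[7,8,9,14],[7,12,11,16],[10,11,12,17],[0,1,2,7],[8,13,18,17],[5,6,11,12],[1,2,7,12],[1,6,11,16],[2,7,8,13],[0,5,6,11],[12,17,16,15],[5,6,7,12],[6,7,8,11],[3,8,7,12],[1,6,5,10],[6,11,16,15],[3,4,8,13],[6,7,11,10],[5,10,11,12],[10,11,15,16],[0,1,5,10],[4,9,14,13],[3,8,13,14],[0,1,2,3],[6,7,12,17],[1,6,7,12],[2,3,8,9],[1,6,11,12],[3,8,13,12],[0,1,6,7],[10,11,16,17],[3,8,13,18],[1,2,3,4],[10,11,12,13],[3,8,9,14],[8,9,13,14],[6,7,8,9],[2,7,12,13],[5,6,11,16],[6,7,11,12],[1,2,6,7],[9,14,13,12],[0,1,6,11],[1,2,6,5],[12,13,17,18],[2,7,12,11],[8,13,12,11],[6,11,12,13],[2,7,6,5],[3,4,8,9],[8,9,13,18],[5,6,10,11],[1,6,11,10],[3,8,7,6],[0,5,6,7],[7,8,12,13],[4,9,8,7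],[7,12,11,10]]

def M3 : List ℕ := [933888,198720,143616,230400,270720,552960,921600,67776,794880,8460,6528,417792,33888,99360,983040,803328,541440,156,135552,4236,13056,460800,811008,200832,35904,2118,540,1248,79872,397440,2244,399360,208896,798720,466944,549120,24960,8640,270,137280,274560,30720,276480,287232,541200,159744,8976,68640,3105,39,491520,104448,480,78,135300,39936,16920,202752,33825,390,4992,204,12480,408,17280,71808,138240,135,401664,6240,4230,67650,8580,2145,233472,4320,2496,4488,1122,100416,8472,3264,7200,101376,1059,25104,24840,15,135360,4290,780,6210,12552,195,199680,270600,30,15360,17160,25344,960,12420,67680,6336,198,29184,2115,102,405504,6276,14592,14400,228,792,271104,3168,3138,456,225,12672,912,7296]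

def P4 : List (List ℕ) :=
 [[12,13,14,17,18,19],[8,13,14,18,17,19],[5,10,11,12,15,16],[6,11,10,15,16,17],[8,9,13,12,14,19],[9,14,13,12,18,19],[8,13,12,17,18,19],[2,3,4,9,14,19,18,17],[6,11,12,13,16,17],[7,12,11,16,17,18],[4,9,8,13,14,19],[7,8,12,11,13,18],[11,12,16,15,17,18],[5,10,15,16,17,18,19,14],[11,12,13,14,17,18],[12,13,17,16,18,19],[7,8,12,13,14,17],[2,3,7,6,8,13],[5,6,10,11,12,15],[2,3,4,7,8,13],[8,9,14,19,18,17,12,11],[6,11,16,17,18,13,14,19],[8,9,13,14,18,19],[6,7,11,12,13,16],[2,3,4,8,9,13],[2,7,6,11,12,17],[8,9,14,19,18,17,16,11],[7,12,13,17,16,18],[6,7,11,12,16,17],[4,9,8,7,13,14],[5,6,7,10,11,16],[0,1,5,6,7,10],[10,15,16,17,18,13,14,19],[10,15,16,17,12,13,14,19],[2,3,4,7,6,11,10,15],[6,7,8,9,12,13],[7,8,13,14,18,17,16,11],[5,6,7,8,10,15,16,17],[3,4,8,7,9,14],[5,6,10,11,15,16],[0,1,2,3,5,10,15,16],[7,8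,9,12,13,18],[6,7,8,11,12,17],[1,2,3,8,9,14,19,18],[6,7,11,16,17,18,19,14],[3,4,8,9,13,14],[7,8,13,18,17,16,15,10],[5,6,7,8,11,12],[0,1,2,5,10,15,16,17],[7,8,12,11,13,14],[1,2,3,4,6,9,11,14],[0,5,6,7,10,11],[10,11,12,13,16,17],[0,5,10,11,12,17,18,19],[1,2,3,4,7,8],[6,7,8,11,13,16,18,19],[6,7,8,11,13,14,16,19],[4,9,14,13,18,17,16,19],[10,11,12,15,16,17],[5,6,7,8,10,13,14,19],[7,8,9,13,14,18],[0,1,2,3,4,5,10,15],[0,1,2,3,4,5,9,10],[6,7,11,10,12,17],[0,1,2,3,6,7],[6,7,8,11,13,16,17,18],[11,12,13,14,16,15,18,19],[10,11,12,15,17,18,19,14],[5,6,7,10,15,16,17,18],[3,8,9,13,14,18],[2,7,8,12,13,17],[5,6,10,15,16,17,18,13],[0,1,2,7,8,13,14,19],[1,6,7,11,12,16],[4,9,8,13,18,17,16,19],[2,3,7,6,11,12,16,15],[5,6,7,8,9,14,19,18],[8,13,12,11,17,18],[3,8,7,12,13,18],[0,5,10,15,16,17,18,19],[0,1,2,6,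7,11],[1,2,3,6,11,16,17,18],[1,2,3,7,8,12],[0,1,2,3,4,9,14,19],[0,1,2,5,6,7],[6,7,8,11,13,14,16,17],[8,13,18,17,16,15,10,19],[6,11,10,12,15,17,18,19],[8,9,14,19,18,17,16,15],[0,5,6,10,11,15],[6,7,8,12,13,17],[1,2,3,6,5,10,15,16],[7,8,9,12,14,17,18,19],[6,11,10,12,13,14,15,19],[5,10,15,16,17,12,13,18],[5,6,7,8,10,13,18,17],[2,3,7,6,11,16,17,18],[10,11,15,16,17,18,13,14],[2,3,7,12,17,16,15,18],[5,10,15,16,17,12,7,18],[1,6,11,16,17,18,19,14],[1,2,3,8,13,14,18,19],[1,6,5,10,11,16],[0,1,5,6,10,11],[6,11,16,17,18,13,8,19],[7,8,9,12,17,16,18,19],[5,6,7,8,10,13,15,18],[6,7,11,10,16,17,18,13],[8,9,13,12,17,16,15,10],[2,3,4,7,9,14,19,18],[4,9,14,13,12,17,16,15],[2,3,7,8,9,12],[1,6,7,8,11,12],[1,2,6,7,8,11],[0,1,2,5,10,11,15,16],[0,1,2,3,8,9,14,19],[2,7,8,12,11,13],[1,2,6,5,7,8],[9,14,19,18,17,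12,11,16],[9,14,19,18,17,12,16,15],[10,11,12,13,15,16,18,19],[5,6,7,10,12,13,14,19],[1,2,7,8,12,11,16,15],[1,2,3,8,13,18,17,16],[1,2,3,6,8,11,16,17],[1,2,3,4,6,5,7,10],[4,9,14,13,12,17,16,19],[6,7,12,13,17,16,15,10],[2,3,4,7,6,9,11,14],[5,6,7,8,9,10,14,15],[8,9,13,12,17,16,15,18],[6,7,8,11,13,16,15,18],[5,10,11,12,13,16,18,19],[5,6,7,10,12,13,18,19],[8,13,12,14,17,16,15,19],[1,6,7,12,17,16,15,10],[1,6,11,12,13,14,16,19],[1,2,3,6,8,11,12,17],[2,3,4,7,6,11,16,17],[3,8,13,14,18,17,16,15],[2,3,4,9,14,13,12,19],[0,1,2,3,5,10,11,12],[1,2,6,11,12,17,18,19],[0,5,6,11,16,15,17,18],[2,3,4,7,6,5,10,15],[7,8,9,12,14,17,16,19],[2,7,6,11,16,15,17,18],[2,3,7,12,13,14,18,19],[2,3,4,7,12,11,17,18],[6,7,8,13,18,17,16,15],[5,6,7,12,17,16,18,19],[7,8,9,12,17,16,15,18],[2,3,4,7,6,9,14,13],[6,7,8,9,14,19,18,1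7],[6,7,8,9,11,12,16,15],[6,11,12,17,18,19,14,9],[8,9,13,12,11,16,15,18],[6,7,8,11,10,13,18,17],[7,8,12,13,17,18],[3,8,9,14,19,18,17,12],[5,6,7,8,12,13,18,19],[5,10,11,12,17,18,19,14],[8,13,12,11,10,14,17,19],[1,2,7,12,13,14,18,19],[10,11,15,16,17,18,19,14],[1,2,7,8,13,14,18,19],[1,2,7,12,11,10,15,16],[3,8,13,18,17,16,11,6],[2,3,7,6,8,9],[1,2,3,6,7,12],[4,9,8,13,18,17,16,15],[5,10,15,16,17,12,18,19],[1,2,3,4,8,13,14,19],[0,1,5,10,11,12,13,8],[1,2,3,6,11,12,16,15],[0,1,2,3,5,6,10,15],[0,1,2,5,6,11],[6,7,11,16,17,18,13,14],[6,7,8,11,13,14,18,17],[2,3,7,6,5,10,15,16],[0,1,2,7,8,13,18,17],[6,7,11,10,12,13],[7,8,12,11,17,18,19,14],[7,8,9,12,11,14,19,18],[8,9,13,14,18,17,16,11],[4,9,8,7,12,13,17,16],[5,10,11,16,17,18,19,14],[9,14,13,12,11,16,15,18],[2,3,7,6,12,17,18,19],[2,3,7,6,12,13,18,19],[2,3,7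,6,11,10,15,16],[5,6,7,10,12,15,17,18],[5,6,7,8,13,18,17,16],[7,8,9,14,19,18,17,16],[2,7,6,8,11,13,18,19],[2,7,6,8,11,13,16,17],[6,7,8,11,16,17,18,19],[6,7,8,9,11,14,19,18],[6,7,8,9,11,14,16,19],[6,7,8,9,11,16,17,18],[8,13,18,17,16,11,10,15],[6,11,10,12,13,8,15,17],[2,3,4,7,12,17,18,19],[7,8,9,12,14,17,16,15],[6,11,12,16,15,17],[6,7,8,11,10,13,16,17],[5,10,11,12,13,14,18,19],[1,2,6,11,16,17,18,13],[1,2,3,6,8,13,18,17],[1,2,6,11,12,13,14,17],[2,3,4,7,12,13,17,16],[1,6,7,12,17,16,18,19],[1,6,11,12,16,17,18,19],[1,2,6,7,11,12],[1,6,11,12,13,16,18,19],[1,2,7,8,9,14,19,18],[3,4,8,13,12,11,16,17],[1,2,3,4,8,9,14,19],[3,4,9,14,19,18,17,16],[0,1,5,10,15,16,17,18],[0,1,5,10,11,16,17,18],[0,1,2,5,10,11,16,17],[1,2,3,8,13,12,11,10],[2,3,4,9,14,13,18,19],[1,2,3,4,6,11,10,15],[0,1,2,3,4,5,9,14],[1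,2,3,4,6,5,10,15],[3,8,7,12,17,16,15,18],[3,8,7,6,11,12,16,15],[5,6,7,10,12,15,16,17],[5,6,7,10,12,13,15,16],[1,6,5,7,10,12,15,16],[3,8,7,6,5,10,12,15],[3,4,8,7,6,5,10,13],[3,4,8,13,12,11,10,17],[3,4,8,7,6,11,10,13],[2,3,4,7,12,11,10,17],[0,1,2,5,7,8,10,15],[2,3,4,7,8,9],[2,3,4,7,12,11,10,15],[2,7,6,5,11,12],[0,1,2,7,12,17,16,15],[9,14,13,12,17,16,15,18],[2,7,8,13,18,17,16,19],[2,7,6,11,16,17,18,19],[7,8,9,12,11,10,14,15],[8,9,13,12,11,10,15,16],[4,9,14,19,18,17,12,7],[2,3,4,7,9,12,14,19],[3,8,7,12,17,18,19,14],[3,8,7,9,12,14,19,18],[3,8,7,9,12,14,17,18],[9,14,13,12,17,16,15,10],[6,7,8,11,10,13,14,15],[0,5,6,11,16,17,18,19],[5,6,11,16,17,18,19,14],[5,6,11,12,13,16,18,19],[6,7,11,12,17,18,19,14],[5,6,7,11,12,16],[8,13,18,17,16,11,10,19],[6,7,8,13,18,17,16,19],[0,5,6,11,12,17,18,19],[5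,6,7,10,12,17,18,19],[5,6,11,12,13,14,18,19],[1,2,7,12,17,16,18,19],[2,3,8,13,18,17,16,11],[3,8,13,12,11,6,14,17],[1,2,3,8,13,12,14,17],[1,2,3,6,8,11,13,14],[3,4,9,14,13,12,11,18],[2,7,12,11,13,14,9,18],[2,3,4,7,12,11,13,18],[3,4,9,14,13,12,7,18],[2,3,4,7,9,14,13,18],[2,3,4,7,9,12,11,14],[1,6,7,8,12,13,18,19],[2,7,8,13,18,17,16,11],[2,7,6,8,11,13,18,17],[3,4,8,7,6,11,16,17],[1,2,3,8,13,12,17,16],[1,6,11,12,13,8,3,16],[1,2,3,6,8,13,12,17],[3,4,8,7,12,11,13,16],[3,8,7,6,12,13],[3,8,13,12,11,16,15,18],[1,2,3,8,13,12,14,19],[3,4,9,14,13,18,17,16],[5,10,11,12,16,17,18,19],[0,5,10,11,12,13,14,17],[2,3,8,13,12,11,10,5],[3,4,9,14,13,12,11,6],[1,2,3,4,9,14,13,12],[1,2,3,4,9,14,19,18],[0,1,2,3,4,9,14,13],[6,7,8,11,16,15,17,18],[7,8,13,18,17,16,11,10],[2,3,4,7,12,11,16,15],[2,3,8,13,12,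11,10,17],[1,6,11,10,12,13,8,17],[1,2,3,6,11,10,12,17],[1,2,3,6,8,11,10,13],[7,8,12,13,17,16,15,10],[1,2,3,6,5,8,10,15],[3,8,7,6,13,18,17,16],[3,8,7,6,11,16,17,18],[3,8,7,6,11,13,16,18],[5,10,11,16,17,18,13,14],[3,4,8,7,6,11,16,15],[1,2,3,4,6,7,11,10],[1,2,6,5,10,15,16,17],[5,6,10,15,16,17,12,13],[2,7,6,5,10,15,16,17],[2,7,6,5,10,12,15,17],[1,6,5,7,10,12,17,16],[9,14,19,18,17,16,15,10],[4,9,14,19,18,17,16,15],[0,1,6,7,8,13,18,19],[2,3,4,7,6,5,9,10],[0,1,6,7,8,13,18,17],[0,1,2,5,7,8,13,14],[6,11,16,15,17,18,13,8],[3,4,8,9,13,12,18,19],[0,5,10,15,16,17,18,13],[0,5,10,11,15,16,17,18],[4,9,8,7,6,11,10,13],[4,9,8,13,12,11,10,15],[6,7,8,9,11,10,12,15],[3,4,8,13,12,11,10,15],[0,1,5,10,15,16,17,12],[2,7,12,17,16,15,10,5],[0,1,2,5,7,10,15,16],[0,5,6,7,8,11,13,14],[5,10,11,12,13,14,16,1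9],[1,6,5,10,11,12],[1,6,5,7,8,9,10,14],[5,10,11,12,13,8,9,16],[0,5,10,11,12,13,14,19],[10,11,16,17,18,13,14,19],[7,12,11,13,14,16,18,19],[5,6,7,10,12,13,15,18],[5,6,7,8,9,12,14,19],[2,7,12,17,18,19,14,9],[2,3,7,12,17,18,19,14],[2,3,4,7,9,12,17,18],[2,7,12,13,14,9,4,19],[4,9,8,7,12,14,17,19],[7,12,13,14,17,18],[8,9,13,12,14,17,16,15],[6,11,10,12,13,14,15,17],[9,14,13,12,11,10,15,16],[6,7,8,9,11,14,16,17],[8,9,13,12,11,14,16,15],[6,7,8,11,13,14,16,15],[6,11,16,17,18,13,14,9],[5,6,7,12,17,18,19,14],[6,7,8,11,13,14,18,19],[6,7,8,11,10,13,14,19],[0,1,2,7,12,13,14,19],[1,2,7,8,12,17,16,15],[1,2,6,7,8,13,14,19],[1,2,6,7,11,10,15,16],[1,6,7,8,12,13,14,19],[1,6,11,16,17,18,13,8],[1,2,3,6,8,11,13,18],[2,3,8,9,13,12,18,19],[2,7,6,11,16,17,18,13],[7,12,17,16,18,19,14,9],[1,2,3,6,8,9,11,12],[2,3,4,7,12,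13,18,19],[2,3,4,7,9,12,13,18],[2,3,4,7,9,12,13,14],[3,4,8,7,12,11,16,17],[2,3,8,13,12,11,16,17],[3,4,8,7,6,11,13,16],[3,8,13,12,14,17,16,15],[4,9,8,13,12,17,16,15],[1,2,3,8,13,12,18,19],[0,1,2,3,8,13,14,19],[0,5,10,11,12,15,17,18],[0,5,10,11,16,17,18,19],[0,1,5,10,11,12,17,18],[0,5,10,11,12,13,8,3],[0,1,2,3,8,13,12,11],[0,1,2,3,5,8,13,12],[0,1,2,3,5,8,10,13],[1,6,11,12,13,14,9,4],[1,2,6,11,12,13,14,9],[2,3,4,9,14,13,12,11],[1,2,3,6,11,12,13,14],[1,2,3,4,6,11,12,13],[1,2,3,6,11,10,12,15],[5,6,10,11,12,17,18,19],[6,11,16,15,17,18,13,14],[7,12,11,10,13,15,16,18],[3,4,8,7,13,14,18,17],[3,4,8,7,12,11,17,18],[3,4,8,13,12,11,16,15],[6,11,10,12,13,15,17,18],[2,3,7,6,12,13,17,18],[3,8,13,12,17,16,15,18],[1,6,5,10,15,16,17,18],[5,6,7,12,17,16,15,18],[1,6,5,7,10,12,17,18],[1,2,6,5,7,12],[5,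6,11,16,17,18,13,14],[5,6,7,8,11,16,17,18],[5,6,7,8,11,13,16,18],[1,2,3,6,5,8,10,13],[1,2,3,6,8,11,16,15],[2,3,4,7,6,11,16,15],[3,8,7,12,11,10,5,16],[1,6,5,7,8,3,10,12],[1,2,6,11,12,13,8,17],[2,7,12,13,17,16,15,10],[2,7,6,5,12,17,16,15],[5,6,7,10,12,13,17,16],[5,10,15,16,17,12,7,8],[1,6,5,10,15,16,17,12],[5,6,7,8,12,17,16,15],[5,6,7,8,10,12,15,17],[0,5,6,7,10,15,16,17],[0,1,2,7,8,13,18,19],[1,2,3,6,8,13,18,19],[0,5,6,7,8,3,13,14],[1,2,3,6,5,8,13,14],[2,3,8,9,14,19,18,17],[3,4,8,9,14,19,18,17],[5,6,7,8,9,10,15,16],[3,4,8,7,6,5,9,12],[5,6,10,11,16,17,18,13],[2,3,4,7,6,9,11,10],[6,11,10,12,13,8,9,15],[2,7,6,8,11,10,13,15],[4,9,8,13,12,11,6,5],[2,7,6,8,9,4,11,13],[4,9,8,7,6,5,10,13],[1,2,7,12,17,16,15,10],[0,1,2,5,7,12,17,16],[0,1,2,5,7,10,12,17],[7,12,11,1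0,16,17],[0,5,10,11,12,7,2,17],[4,9,14,13,12,11,16,19],[7,8,9,12,11,14,16,19],[4,9,8,7,12,11,13,16],[5,10,11,12,7,8,9,14],[4,9,14,13,12,11,10,19],[7,8,9,12,11,10,14,19],[4,9,8,7,12,11,10,13],[0,5,6,11,12,13,14,19],[4,9,14,13,12,11,6,19],[6,7,8,9,11,12,14,19]]

def M4 : List ℕ := [946176,942336,105504,232512,553728,815616,930048,934428,211008,465024,549648,276864,497664,1033248,423936,995328,160128,8652,40032,8604,940800,1009728,811776,80064,8988,137412,1002240,471168,202944,25488,68832,1251,1041408,783360,36060,13248,485760,230880,17304,101472,99375,275328,137664,803598,1001664,25368,501120,6624,230439,31104,19038,3297,211968,924705,414,862656,616896,1008144,236544,550368,287616,33855,1599,138432,207,469440,915456,973824,492768,287496,143748,500832,549255,71874,992016,104652,803808,407808,274824,1016865,2247,460878,4494,541215,231,223680,1025280,957504,1032960,35937,143808,99438,938880,588864,504864,402912,461004,519168,495756,496800,1001538,811278,68706,3171,993600,988032,304608,470208,243456,803484,258576,5004,6594,2502,101415,541455,14724,486,1006080,1036800,900096,554208,104838,467214,198990,1278,750096,242880,1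9164,51168,504576,371136,867360,799968,782592,234690,620610,137550,198876,516360,553500,7215,923718,493665,34044,742272,493764,815244,399516,500160,987360,496512,25308,934848,105408,940608,375552,404928,405888,938760,799200,941088,687360,815238,1035264,811398,105606,469320,972,4302,500496,1020960,549150,15651,104526,33903,2151,485568,420288,99564,401799,15552,940416,809856,486144,209808,1002528,391680,921804,798924,101580,431328,467424,1000320,797124,207300,985536,805824,609216,461760,503040,179520,921756,250752,235584,208320,818208,469062,401742,161862,209052,987330,989250,6342,866370,803718,211224,541470,999960,492579,461859,199719,15630,811548,35934,16959,33918,496008,104904,234720,111840,103650,38376,9720,146712,11736,138396,34215,924,40092,6372,233607,520704,991620,985284,57216,114432,938640,545436,938376,807816,414600,259584,60864,985185,1001568,866400,940224,71904,994560,991680,923745,922848,817248,987270,469260,162120,160014,26958,293400,293508,276636,291480,287388,23196,799170,469380,403908,199128,209166,80202,143694,80280,12744,375048,553230,483864,990240,162849,15660,31320,29214,803358,25119,494016,470400,104604,146700,146754,138318,11598,243072,34158,467400,461256,338376,486432,100824,3294,230502,242784,230628,169188,201954,1033728,1032720,795075,1788,401859,24999,502080,799512,500769,494625,12240,48912,4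0896,48408,234531,234660,99495,27105,621600,7266,18402,81696,556065,1010688,882816,308448,545760,938628,938124,397980,553620,676752,422016,258816,195648,130560,216000,129792,125376,485952,938208,813504,552384,553095,233862,549318,101574,553410,469314,272718,799500,469188,1004160,6990,798876,275100,29340,203160,211212,76248,258312,242448,798990,549135,433185,986145,400419,15657,14607,12591,9519,31314,31302,31260,30798,14430,40014,924768,518208,375936,418200,399768,112920,441408,405708,504072,492642,495840,398562,4326,485472,461280,338400,9582,100686,100572,73128,5610,145734,242820,233700,210144,234912,234594,233952,169440,230625,795015,794958,25065,24942,934668,934680,100320,5112,470112,3804,48960,44484,15216,11220,10224,234630,200871,136359,203904,138405,621072,613248,80784,24480,556560,548736,16272,555105,555600,547776]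

def P5 : List (List ℕ) :=
 [[8,9,13,12,11,14,17,18,19],[5,6,7,8,10,13,15,16,17,18],[5,10,11,12,15,16,17,18,19,14],[10,11,12,13,14,15,16,17,18,19],[9,14,13,12,17,16,15,10,18,19],[6,7,8,11,12,13,16,17,18],[2,3,4,7,6,8,9,13,14],[6,11,12,13,14,9,16,17,18,19],[6,7,8,11,12,13,14,16,17],[1,2,3,6,5,10,11,12,15,16],[7,8,12,11,13,14,17,18,19],[6,7,8,11,13,14,16,17,18,19],[5,6,7,10,12,13,15,16,17,18],[2,3,7,6,11,12,16,15,17,18],[0,5,6,10,11,15,16,17,18,19],[7,8,9,12,11,14,16,17,18,19],[2,3,4,7,9,12,14,17,18,19],[1,2,3,4,6,9,11,12,13,14],[5,6,7,8,9,10,12,13,14,19],[4,9,8,7,13,14,18,17,16,19],[4,9,8,7,12,13,14,17,16,19],[6,11,10,12,13,14,15,16,17,19],[2,3,4,7,6,11,10,12,15,17,18,19],[2,3,4,8,9,13,14,18,17,19],[0,1,2,3,5,6,7,10,15,16],[1,2,3,6,8,11,13,16,17,18],[8,13,12,11,10,15,16,17,18,19],[9,14,13,12,11,10,15,16,17,1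8],[1,2,3,8,9,13,12,14,18,19],[1,2,3,4,6,5,7,8,10,13],[7,8,9,12,13,14,17,18,19],[6,7,8,11,10,12,13,17,18],[1,2,3,6,7,8,12,13,17],[0,1,2,5,6,10,11,15,16,17],[7,8,12,11,13,14,16,17,18],[5,6,7,8,9,10,11,12,14,15],[3,8,9,13,12,14,17,18,19],[5,10,11,12,13,8,9,14,15,16,18,19],[2,3,4,7,6,9,11,14,16,17,18,19],[1,2,3,4,7,8,9,14,19,18],[3,8,13,12,11,14,16,15,17,18],[1,2,3,4,8,9,13,12,14,19],[0,1,2,3,4,5,9,10,14,15,16,17,18,19],[0,1,2,3,6,7,8,13,18,19],[7,8,9,12,11,13,14,18,19],[4,9,8,13,14,18,17,16,11,19],[6,7,8,9,11,14,16,17,18,19],[6,7,8,9,11,12,14,17,18,19],[5,6,10,11,12,13,14,9,15,16,18,19],[6,11,10,12,13,14,9,15,16,17],[0,5,6,7,10,11,12,17,18,19],[0,1,2,7,8,12,13,14,17,16,15,19],[4,9,14,13,12,11,16,17,18,19],[4,9,8,7,12,13,17,16,18,19],[5,6,7,8,9,12,14,17,16,15,18,19],[0,5,6,7,8,10,11,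13,14,18,17,19],[5,10,11,12,13,8,14,17,18,19],[1,6,7,8,11,12,13,14,16,19],[1,2,3,6,8,9,11,14,16,17,18,19],[0,1,2,3,5,8,9,10,11,12,14,15,16,19],[1,2,3,4,6,9,11,14,16,17,18,19],[1,2,3,6,5,7,8,10,12,15],[2,3,4,7,6,5,9,10,14,15,16,17,18,19],[0,1,5,6,7,8,10,13,14,18,17,19],[0,1,5,6,7,8,9,10,13,14,18,19],[6,11,10,12,13,8,9,15,16,17],[4,9,8,7,6,11,10,13,14,15,16,17],[1,6,7,11,10,12,15,16,17],[2,7,6,11,12,13,16,17,18],[2,7,6,8,11,12,13,16,17],[0,1,5,10,11,12,15,16,17,18],[2,3,4,8,9,13,12,11,10,5,15,16],[1,2,3,4,6,9,11,12,14,17,18,19],[5,10,11,12,13,8,15,16,17,18],[5,6,7,10,11,12,15,16,17],[1,2,3,6,5,8,10,13,15,16,17,18],[1,6,5,7,10,12,15,16,17,18],[1,2,3,4,6,7,8,11,16,15],[2,3,4,7,6,8,9,11,10,13],[2,3,4,7,6,5,10,11,12,15],[0,1,2,5,7,10,12,15,16,17],[0,1,2,5,6,7,8,11,13,14],[6,7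,8,9,11,12,16,15,17,18],[8,9,13,12,11,10,15,16,17,18],[2,3,4,7,8,12,13,17,18,19],[3,8,7,9,12,13,14,18,19],[4,9,8,7,12,13,14,17,16,15],[5,6,11,12,13,14,16,17,18,19],[1,6,11,12,13,14,16,17,18,19],[2,3,4,7,6,11,12,13,16,17],[3,8,7,9,12,14,17,16,18,19],[1,2,3,4,6,7,8,11,16,17],[0,1,2,3,4,5,9,10,14,13,12,17,18,19],[0,1,2,3,4,5,9,10,14,13,12,15,16,17],[0,1,2,3,5,8,9,10,13,14,15,16,18,19],[0,1,2,3,4,8,9,13,14,19],[5,10,11,12,13,8,16,17,18,19],[0,1,5,10,11,12,13,8,3,9,14,17,18],[6,11,10,12,13,15,16,17,18,19],[1,2,3,4,6,5,9,10,11,14,15,16,19,18],[0,1,5,6,10,11,12,13,14,17,18,19],[1,2,3,6,5,8,9,10,14,15,16,17,18,19],[2,7,6,5,10,12,13,15,16,17],[0,1,5,6,7,10,15,16,17,18,19,14,9,4],[0,1,2,3,6,7,8,13,18,17],[4,9,8,7,6,11,10,12,13,15],[2,3,4,8,9,13,12,11,6,5,10,15],[2,7,6,8,11,13,16,17,18,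19],[6,7,11,10,12,13,16,17,18],[6,7,8,11,10,13,15,16,17,18],[6,7,8,9,11,12,13,16,15,18],[1,6,7,11,12,16,17,18,19,14],[1,2,3,6,7,8,9,11,12],[2,7,8,12,11,13,16,17,18],[3,4,9,14,13,12,17,16,18,19],[1,2,3,8,13,12,17,16,15,10,5,18,19],[4,9,8,13,14,18,17,16,15,19],[0,1,2,5,10,15,16,17,18,13,8,9,14,19],[0,5,10,15,16,17,18,13,8,3,2,4,9,19],[0,1,5,10,15,16,17,18,13,8,3,4,9,14],[0,1,2,3,5,8,9,10,11,14,16,17,18,19],[0,5,10,11,12,15,16,17,18,19],[0,1,2,3,5,8,10,11,12,13],[3,4,8,7,6,11,10,12,13,17],[1,2,6,5,10,15,16,17,12,13,8,9,14,19],[0,1,2,3,4,5,6,7,9,10],[2,3,8,9,14,19,18,17,12,11,6,5,10,15],[2,3,4,7,6,8,9,11,10,15,16,17],[3,4,8,7,6,5,9,10,11,14,15,16],[0,5,6,7,2,3,4,8,10,11,13,15],[0,5,6,7,2,3,4,9,10,11,14,19,18,17],[0,1,2,6,7,11,12,16,15,17],[6,11,10,15,16,17,18,13,8,9,14,19],[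2,3,7,12,13,14,17,16,15,10,18,19],[2,7,8,9,4,12,13,14,17,19],[5,6,7,10,11,12,13,16,18,19],[5,6,7,8,9,10,11,13,14,16,18,19],[6,7,8,11,10,12,13,14,15,17],[5,6,7,8,12,13,17,16,18,19],[5,6,7,11,12,16,17,18,19,14],[6,7,8,11,10,13,16,17,18,19],[4,9,8,7,6,5,10,11,13,14,16,19],[0,1,2,7,8,13,14,18,17,16,11,10,15,19],[1,2,6,7,8,9,13,14,18,17,16,15,10,19],[0,1,2,6,7,8,11,10,13,14,15,16,17,19],[1,6,7,8,12,13,17,16,18,19],[1,6,7,8,11,12,16,17,18,19],[2,7,6,8,11,12,13,17,18],[2,3,4,7,9,12,13,14,18,19],[2,3,4,7,8,9,13,14,18],[2,3,4,7,8,9,12,13,18],[2,3,4,7,8,12,11,13,16,17],[1,2,3,6,8,11,12,13,16,17],[0,1,2,5,10,11,12,13,8,14,15,16,17,19],[4,9,8,13,12,11,16,15,17,18],[1,2,3,8,13,12,11,10,5,14,15,16,18,19],[0,1,2,3,5,8,9,10,14,15,16,17,18,19],[0,1,2,3,5,8,9,10,11,12,14,17,18,19],[0,5,10,11,12,13,8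,3,2,4,9,17,18,19],[0,5,10,11,12,13,16,17,18,19],[0,1,2,5,10,11,12,13,8,9,14,16,17,19],[4,9,8,13,12,11,10,5,14,15,16,19],[2,3,4,9,14,13,12,11,6,10,15,17,18,19],[1,2,6,11,12,13,16,17,18,19],[0,1,2,3,4,5,6,9,10,11,14,19,18,17],[3,8,7,12,13,14,17,16,15,18],[5,6,7,10,11,12,13,15,16],[7,12,11,10,13,14,15,16,17,18],[1,2,3,6,8,11,10,12,13,17],[3,8,7,6,11,13,14,16,17,18],[3,8,7,6,5,10,11,12,15,16],[1,6,5,7,10,11,12,15,16],[1,2,6,7,8,11,12,13,17],[1,2,3,4,6,7,11,10,12,17],[1,2,3,4,6,7,8,11,10,13],[0,1,2,5,6,7,8,13,14,18,17,19],[0,1,2,3,4,6,7,9,14,19,18,17,16,15],[0,1,2,3,4,5,8,10,13,14,15,18,17,19],[0,1,2,3,4,5,6,7,10,15],[2,3,7,6,5,8,9,10,13,14,15,16,18],[0,1,5,6,7,8,9,4,10,13,14,19],[2,3,4,7,8,9,14,19,18,17,16,11,10,15],[2,3,4,7,8,9,12,11,16,15,17,18],[3,4,8,7,9,12,11,10,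5,14,15,16],[2,3,7,6,5,10,12,15,16,17,18,19],[2,3,4,7,6,5,10,11,15,16,17,18,19,14],[2,3,7,6,5,10,11,12,15,16],[2,3,4,7,6,8,9,11,10,14,15,19,18,17],[2,7,6,8,11,13,16,15,17,18],[0,5,6,10,11,15,16,17,18,13],[2,3,4,8,9,13,12,11,6,10,15,17,18,19],[2,3,4,7,8,12,11,10,13,15],[1,2,6,5,7,8,9,10,11,14,16,19,18],[0,1,2,5,7,8,9,4,10,13,14,15,16,19],[0,1,2,5,6,11,12,13,8,14,16,15,17,19],[0,1,5,6,10,11,12,13,8,9,14,19],[0,1,2,5,7,8,9,4,10,13,14,15,16,17],[1,6,5,7,8,9,10,11,12,14],[0,5,6,7,10,11,12,13,14,19],[2,3,4,7,6,11,10,15,16,17,18,13,14,19],[7,12,11,10,13,14,16,17,18,19],[2,3,7,6,11,10,12,13,15,16,18,19],[7,8,9,12,13,17,16,15,10,18],[3,8,7,12,13,14,17,18,19],[3,8,7,9,12,13,14,17,18],[6,7,8,9,11,12,14,16,15,17],[6,7,8,9,11,12,13,14,16,15],[0,5,6,10,11,12,13,14,15,17,18,19],[5,6,7,8,11,12,1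3,16,18,19],[0,5,6,7,10,11,16,17,18,13,14,9,4,19],[6,7,8,9,11,13,14,16,17,18],[5,6,7,8,12,13,14,17,18,19],[5,6,7,8,11,12,13,14,18,19],[6,7,8,11,10,12,13,14,17,19],[1,2,7,12,13,14,17,16,15,10,18,19],[1,2,7,12,11,10,15,16,17,18,19,14],[1,2,7,8,12,11,13,14,16,15,18,19],[0,1,2,6,7,11,10,15,16,17,18,13,14,19],[0,1,2,6,7,8,11,13,14,18,17,19],[1,2,6,7,8,9,11,10,13,14,15,16,18,19],[1,2,3,6,8,11,12,13,14,17],[2,3,4,7,9,12,11,13,14,18],[1,6,11,12,13,8,16,17,18,19],[1,6,7,8,11,12,13,16,18,19],[1,2,7,8,9,12,13,14,18,19],[1,2,3,7,8,12,13,14,18,19],[2,3,4,7,8,9,12,13,14],[3,4,8,7,6,11,12,13,16,17],[1,6,7,8,3,4,11,12,13,16],[4,9,8,13,12,11,10,14,15,16,17,19],[0,1,2,5,10,11,15,16,17,18,13,8,14,19],[1,2,3,4,8,9,14,19,18,17,12,11,16,15],[0,1,2,3,5,10,15,16,17,12,13,14,18,19],[0,1,2,3,4,5,10,15,16,17,1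2,13,18,19],[0,1,2,3,4,5,9,10,14,13,12,15,18,19],[1,2,3,4,8,13,14,18,17,16,11,10,15,19],[1,2,3,4,8,13,12,11,10,14,15,16,17,19],[1,2,3,4,8,13,14,18,17,16,15,10,5,19],[1,2,3,8,9,14,19,18,17,12,11,10,15,16],[0,1,2,3,8,9,14,19,18,17,12,11,16,15],[0,1,2,5,10,11,12,13,14,9,15,16,18,19],[0,1,2,3,4,5,9,10,11,12,14,15,16,19],[3,8,9,13,12,11,10,5,14,15,16,18],[3,4,8,9,13,12,11,10,5,14,15,16],[2,3,4,9,14,13,18,17,16,11,6,10,15,19],[1,2,3,6,5,10,15,16,17,12,13,14,18,19],[1,2,3,4,6,11,10,15,16,17,18,13,14,19],[1,2,3,4,6,11,10,12,13,14,15,17,18,19],[0,1,2,3,4,6,9,11,10,14,15,16,17,19],[0,1,2,3,4,5,6,9,11,14,16,15,17,18],[0,1,2,3,5,6,10,15,16,17,12,13,18,19],[0,1,2,3,5,6,10,11,12,15],[2,3,4,9,14,13,12,11,6,5,10,17,18,19],[0,1,2,3,4,5,6,9,10,11,12,17,18,19],[2,3,4,9,14,13,12,11,10,5,15,16,18,1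9],[1,2,3,4,6,5,9,10,14,13,12,15,18,19],[0,1,2,3,4,6,9,11,10,14,13,15,16,17],[6,7,11,12,13,14,16,17,18],[6,7,8,11,13,14,16,15,17,18],[3,8,7,6,11,12,16,15,17,18],[6,7,8,11,12,13,14,17,18],[3,8,7,6,11,12,13,16,15,18],[7,8,12,11,10,13,16,17,18],[1,2,3,4,7,8,13,14,18,17,16,11,10,15],[1,2,3,4,7,8,12,11,16,15,17,18],[3,4,8,7,12,11,13,14,17,18],[2,3,4,7,8,12,11,13,16,15],[5,10,11,12,13,14,15,16,17,18],[2,3,4,7,6,5,10,11,15,16,17,18,13,14],[2,3,4,7,6,11,10,12,13,15,17,18],[3,8,7,12,13,17,16,15,10,18],[5,6,7,8,11,13,14,16,17,18],[1,2,3,4,7,8,13,14,18,17,16,11,10,5],[1,2,3,4,6,5,7,10,11,16,17,18,13,14],[1,2,3,6,7,11,10,12,15,16],[1,2,3,4,7,8,12,11,10,5,15,16],[1,2,3,6,7,8,11,12,16,15],[1,6,5,7,8,3,10,11,12,16],[2,3,4,7,8,12,11,10,13,17],[2,7,6,5,8,9,4,10,13,14,15,16,17,19],[1,6,5,7,8,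10,12,15,16,17],[0,5,6,7,8,9,4,10,13,14,15,16,17,19],[0,1,2,5,6,7,10,15,16,17,18,13,14,19],[5,6,7,8,9,10,14,15,16,17,18,19],[0,1,2,5,6,7,8,10,13,14,15,16,17,19],[0,1,2,3,4,6,7,9,14,13,18,17,16,19],[0,1,2,5,6,7,10,15,16,17,18,19,14,9],[0,1,2,3,4,5,6,7,9,14,19,18,17,16],[0,1,2,5,7,8,10,13,15,16,17,18],[2,3,4,7,6,5,8,10,13,14,15,18,17,19],[0,1,2,3,5,6,7,8,13,14],[3,4,8,9,14,19,18,17,16,11,6,5,10,15],[6,11,12,13,8,9,16,15,17,18],[6,7,8,9,12,13,17,16,15,18],[3,4,8,9,13,12,17,16,15,10,5,18,19],[5,6,7,8,9,10,12,15,16,17,18,19],[5,6,7,8,10,12,13,17,18,19],[3,4,8,7,6,5,9,10,12,13,18,19],[5,6,7,8,10,12,13,15,16,17],[0,5,10,11,15,16,17,18,13,8,3,2,4,7],[0,5,6,7,10,11,15,16,17,18],[3,8,7,6,11,10,13,16,17,18],[5,6,7,10,11,12,16,17,18,19],[6,7,8,11,10,12,13,16,17],[2,7,6,8,9,11,10,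12,13,15],[2,7,6,5,8,9,4,11,12,13],[2,3,4,7,6,5,8,9,10,13],[2,3,4,9,14,19,18,17,12,11,6,5,10,15],[0,1,5,10,15,16,17,12,13,8,9,4,14,19],[1,6,5,7,10,11,12,16,17],[0,5,6,7,2,10,11,12,15,17],[4,9,8,7,12,11,13,14,16,19],[1,6,5,10,11,12,13,8,9,14,16,19],[5,6,7,10,11,12,13,14,16,19],[5,6,7,8,9,10,11,12,13,16],[4,9,8,7,12,11,10,13,14,19],[4,9,8,13,12,11,6,5,10,14,15,19],[4,9,8,7,6,11,12,13,14,19],[0,5,6,7,8,9,4,10,11,13,14,19]]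

def M5 : List ℕ := [948992,501216,1039392,1047552,1046016,473536,25564,1014336,227776,105582,948608,1010112,505056,497868,1018977,1006464,938652,31326,554976,1008528,750480,785472,957660,942876,99567,469326,1031424,523776,815886,9726,947072,409024,143822,232551,489856,57312,946952,917280,1002204,803742,522504,553758,1033791,795087,818048,1010448,1002432,940992,917088,261696,924897,782727,1014288,996240,1037280,945633,949536,620994,1002318,646959,1002078,38382,1033980,943587,813027,245568,258000,236738,473284,211396,498723,114492,940638,507168,236768,501102,496866,100830,12252,40188,234663,27111,498624,507648,930204,816008,258960,1013856,1013826,211164,1004424,199134,947775,259647,911151,549663,998688,425771,1031232,904830,949347,1034094,242916,1033971,401871,49104,49020,993732,474304,503232,375744,1005762,7118,473476,1012248,1029422,1041168,1042215,1025853,517947,1003311,1023009,15663,146904,784230,1791,974700,233436,118776,44541,937725,235719,1044288,1045644,684948,867552,880608,196032,995808,1005792,994752,618480,1043847,1042374,781767,995778,989634,408004,815772,287644,275356,211356,211278,785703,506640,916782,1034031,941871,933693,998433,753447,655152,982620,997446,937599,520584,113888,523392,146766,485832,105960,105698,145862,138462,11742,942567,1032927,976191,34047,387052,550899,1036188,4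98588,122808,1021164,1035516,105708,970716,502212,502881,966492,48540,872422,649143,784743,556899,255927,24546,556257,1043676,1014912,900300,505728,946568,422792,252864,129984,982113,866784,1011441,486336,946656,817632,687552,1045638,1039494,915846,1043655,944583,913350,162126,293532,997698,866754,816006,815502,29596,211416,80346,786192,1043751,1039134,1045551,1029183,849471,1043742,785694,1041726,1040142,1039119,917031,646719,393000,130872,1044060,1045614,1043550,982110,773727,510591,1029231,40047,949884,925311,917052,849534,257631,489664,518592,498120,424384,375240,474496,519582,498078,424344,113052,523296,519420,441564,505224,485856,486846,486654,105678,105918,104910,73194,146844,780276,234978,780273,1041639,1034208,779751,1008351,1033959,1000191,501159,976380,25071,1036152,506688,504768,1029944,1021920,931296,800760,243168,503229,494817,470472,990432,212416,49092,15348,10236,974460,784179,204002,171237,621456,622434,621792,81888,556944,589680,555984,552945]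

def P6 : List (List ℕ) :=
 [[6,7,8,9,11,12,13,14,16,17,18,19],[2,3,4,7,8,9,12,13,14,17,18,19],[6,7,8,9,11,10,12,13,15,16,17,18],[1,2,3,4,6,5,7,8,10,11,12,15,16],[1,2,3,4,7,8,9,12,13,14,18,19],[5,6,7,8,9,10,12,13,14,15,16,17,18,19],[5,6,7,8,9,10,11,12,14,15,16,17,18,19],[5,6,7,8,9,10,11,12,13,14,15,16,18,19],[4,9,8,7,6,11,10,12,13,14,15,16,17],[1,2,3,4,6,7,8,11,12,13,16,17],[0,5,6,10,11,12,13,14,9,15,16,17,18,19],[0,5,6,7,8,10,11,12,13,14,17,18,19],[2,3,4,7,6,5,8,9,10,11,12,13,15],[1,2,3,6,7,8,9,11,12,14,16,17,18,19],[4,9,8,13,12,11,10,5,14,15,16,17,18,19],[0,1,2,3,4,5,9,10,14,13,12,15,16,17,18,19],[1,2,3,6,5,7,8,10,12,13,15,16,17,18],[4,9,8,7,12,11,13,14,16,17,18,19],[5,6,10,11,12,13,8,9,14,15,16,17,18,19],[0,1,2,6,7,8,11,10,12,13,14,15,16,17,19],[0,1,2,3,4,5,8,9,10,13,14,15,16,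17,18,19],[0,5,10,11,12,13,8,3,2,4,9,15,16,17,18,19],[1,2,3,4,6,9,11,12,13,14,16,17,18,19],[1,2,3,4,6,5,9,10,11,12,13,14,15,16,18,19],[3,8,7,6,11,12,13,14,16,15,17,18],[2,3,4,7,6,5,8,9,10,13,14,15,16,17,18,19],[0,1,2,3,4,6,7,8,9,13,14,18,17,16,19],[0,1,2,3,5,6,7,8,10,13,15,16,17,18],[0,1,2,5,6,7,10,11,12,15,16,17],[2,3,4,7,6,11,10,12,13,14,15,16,17,18,19],[2,3,4,7,6,8,9,11,13,14,16,17,18,19],[5,6,7,8,11,12,13,14,16,17,18,19],[1,2,3,4,8,9,13,12,11,14,16,15,17,18,19],[0,1,2,3,4,5,6,9,10,11,14,15,16,17,18,19],[0,1,2,3,4,5,6,9,10,11,12,13,14,15,16,17],[5,6,7,8,10,11,12,13,15,16,17,18],[1,2,3,6,5,7,8,9,10,12,14,15,16,17,18,19],[1,2,6,5,7,8,9,4,10,12,13,14,15,16,17,19],[0,1,5,6,7,8,9,4,10,13,14,15,16,17,18,19],[0,1,2,3,4,5,6,7,9,10,14,15,16,17,18,19],[2,3,4,7,6,5,8,9,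10,11,12,14,15,17,18,19],[0,5,6,7,2,3,10,11,12,15,16,17,18,19],[2,3,4,7,6,8,9,11,10,12,13,15,17,18,19],[1,6,5,7,8,9,4,10,11,12,13,14,16,19],[0,5,6,7,8,9,4,10,11,13,14,16,17,18,19],[0,1,2,7,8,12,11,10,13,14,15,16,17,18,19],[0,1,2,6,7,8,9,11,10,13,14,15,16,17,18,19],[1,2,3,6,8,9,11,12,13,14,16,17,18,19],[2,3,4,7,6,9,11,12,13,14,16,17,18,19],[1,6,7,8,11,12,13,14,16,17,18,19],[1,2,6,7,8,11,12,13,16,17,18,19],[0,1,2,5,10,11,12,13,8,9,14,15,16,17,18,19],[1,2,3,4,8,13,12,11,10,5,14,15,16,17,18,19],[0,1,2,3,5,8,9,10,11,12,14,15,16,17,18,19],[0,1,2,3,5,8,9,10,11,12,13,14,16,17,18,19],[0,1,2,3,4,5,8,9,10,11,12,13,14,17,18,19],[0,1,2,3,5,8,9,10,11,12,13,14,15,16,18,19],[0,1,2,3,4,5,8,9,10,11,12,13,14,15,16,19],[0,1,5,10,11,12,13,8,3,4,9,14,15,16,17,18],[2,3,4,9,14,13,12,11,6,5,10,15,16,1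7,18,19],[1,2,3,4,6,5,10,11,12,13,14,15,16,17,18,19],[0,1,2,3,5,6,10,11,12,13,15,16,17,18,19],[0,1,2,3,4,5,6,9,10,11,12,13,14,17,18,19],[1,2,3,4,7,8,12,11,10,13,14,15,16,17,18],[1,2,3,6,5,8,10,11,12,13,15,16,17,18],[2,3,4,7,6,5,10,11,12,13,14,15,16,17,18],[1,2,3,4,6,5,7,8,10,11,13,14,16,17,18],[1,2,3,4,6,7,8,11,10,12,13,17],[1,2,3,6,5,8,9,10,13,12,14,15,16,17,18,19],[2,3,4,7,6,5,9,10,12,13,14,15,16,17,18,19],[0,1,2,5,6,7,8,9,10,13,14,15,16,17,18,19],[0,1,2,3,4,5,6,7,8,10,13,14,15,18,17,19],[0,1,2,3,5,6,7,8,9,10,13,14,15,16,18,19],[0,1,2,3,4,5,6,7,8,9,10,13,14,19],[2,3,4,7,8,9,12,11,10,5,14,15,16,17,18,19],[1,2,3,6,5,8,9,10,11,12,14,15,16,17,18,19],[2,3,4,7,6,5,10,11,12,15,16,17,18,19,14],[2,3,4,7,6,5,8,9,10,11,14,15,16,17,18,19],[2,7,6,8,9,11,12,13,16,15,17,18],[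3,4,8,7,6,5,9,10,12,13,15,16,17,18,19],[0,5,6,7,2,3,4,8,10,11,13,15,16,17,18],[5,6,7,8,10,11,12,13,16,17,18,19],[2,3,4,8,9,13,12,11,6,5,10,14,15,17,18,19],[0,5,6,7,2,3,4,9,10,11,12,14,15,17,18,19],[0,5,6,7,2,3,4,8,9,10,11,13,14,18,17,19],[1,2,3,4,6,5,7,8,9,10,11,14,15,16,19,18],[0,1,2,5,7,8,9,4,10,12,13,14,15,16,17,19],[0,1,2,5,6,10,11,12,13,8,9,14,15,16,17,19],[0,1,2,5,6,7,8,11,12,13,14,16,15,17,19],[0,1,2,5,6,7,8,9,4,10,11,13,14,15,16,17],[0,5,6,7,8,9,4,10,11,12,13,14,15,19]]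

def M6 : List ℕ := [1014720,947100,507840,105982,816030,1046496,1040352,917472,262096,211422,1048161,949729,49148,1006542,1048368,1046079,505326,1014672,1048416,785863,1042239,1031997,1014366,917118,522696,1042428,1008607,501231,236775,1047772,1010652,1014240,1047326,1035903,261759,507360,1038318,784374,1042419,1033983,974844,1023213,966620,622578,1011697,1047943,1044423,1014606,1014492,1014210,997830,1048359,1047870,1040175,1015599,950079,917295,655167,524091,1048188,1047678,1031279,949887,523678,507246,523516,486910,146910,1046382,1046268,1042407,976383,911343,550911,1040316,1040238,1039612,1036284,506820,1030136,503293,998880,982908,974589,946173,905214,784311,786279,784871,258039,589809]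

def P7 : List (List ℕ) :=
 [[1,2,3,4,6,7,8,9,11,12,13,14,16,17,18,19],[2,3,4,7,6,5,8,9,10,11,12,13,14,15,16,17,18,19],[0,5,6,7,8,9,4,10,11,12,13,14,15,16,17,18,19],[0,1,2,3,4,5,8,9,10,11,12,13,14,15,16,17,18,19],[1,2,3,4,6,5,7,8,10,11,12,13,14,15,16,17,18],[0,1,2,5,6,7,8,9,10,11,12,13,14,15,16,17,18,19],[0,1,2,3,4,5,6,9,10,11,12,13,14,15,16,17,18,19],[1,2,3,4,6,5,7,8,9,10,12,13,14,15,16,17,18,19],[0,1,2,3,4,5,6,7,8,9,10,13,14,15,16,17,18,19],[1,2,3,4,6,5,7,8,9,10,11,12,14,15,16,17,18,19],[0,5,6,7,2,3,4,8,9,10,11,12,13,15,16,17,18,19],[0,5,6,7,2,3,4,8,9,10,11,12,13,14,15,17,18,19],[1,2,3,4,6,5,7,8,9,10,11,12,13,14,15,16,18,19],[0,1,2,5,6,7,8,9,4,10,11,12,13,14,15,16,17,19]]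

def M7 : List ℕ := [1014750,1048572,1048561,1048383,523774,1048551,1048191,1046526,1042431,1040382,1032189,983037,917502,786423]

def P8 : List (List ℕ) :=
 [[0,1,2,3,4,5,6,7,8,9,10,11,12,13,14,15,16,17,18,19]]

def M8 : List ℕ := [1048575]

def frTab : List ℕ := [8,1,7,1,2,1,3,1,6,1,2,1,5,1,3,1,4,1,2,1]

def gTab : List (List ℕ) := [
 [100,1,102,2,104,3,106,4,108,5,110,6,112,7,114,8,116,9,118,10],
 [100,1,102,2,2,3,106,4,108,2,3,3,112,5,114,3,116,5,5,5],
 [100,1,102,2,2,1,1,1,108,2,1,1,112,2,2,1,116,2,2,2],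
 [100,1,102,1,1,1,1,1,108,1,1,1,112,1,1,1,1,1,1,1],
 [100,1,102,1,1,1,1,1,108,1,1,1,1,1,1,1,1,1,1,1],
 [100,1,102,1,1,1,1,1,1,1,1,1,1,1,1,1,1,1,1,1],
 [100,1,1,1,1,1,1,1,1,1,1,1,1,1,1,1,1,1,1,1],
 [1,1,1,1,1,1,1,1,1,1,1,1,1,1,1,1,1,1,1,1]]

lemma pm2 : P2.map maskOf = M2 := by decide
lemma good2 : GoodMasks M2 2 := pm2 ▸ level_sound good1 (by decide)
lemma pm3 : P3.map maskOf = M3 := by decide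
lemma good3 : GoodMasks M3 3 := pm3 ▸ level_sound good2 (by decide)
lemma pm4 : P4.map maskOf = M4 := by decide
lemma good4 : GoodMasks M4 4 := pm4 ▸ level_sound good3 (by decide)
lemma pm5 : P5.map maskOf = M5 := by decide
lemma good5 : GoodMasks M5 5 := pm5 ▸ level_sound good4 (by decide)
lemma pm6 : P6.map maskOf = M6 := by decide
lemma good6 : GoodMasks M6 6 := pm6 ▸ level_sound good5 (by decide)
lemma pm7 : P7.map maskOf = M7 := by decide
lemma good7 : GoodMasks M7 7 := pm7 ▸ level_sound good6 (by decide)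
lemma pm8 : P8.map maskOf = M8 := by decide
lemma good8 : GoodMasks M8 8 := pm8 ▸ level_sound good7 (by decide)

lemma hard_univ : HardOn Finset.univ 8 := by
  have h := (good8 1048575 (by simp [M8])).2
  have he : toSet 1048575 = Finset.univ := by decide
  rwa [he] at h

-- ===== upper bound =====
def fr (v : Vg) : ℕ := frTab.getD (enc v) 0
def gc (m : ℕ) (v : Vg) : ℕ := (gTab.getD (m-1) []).getD (enc v) 0

lemma D1 : ∀ v : Vg, 1 ≤ fr v ∧ fr v ≤ 8 := by decide
lemma D2 : ∀ u a b : Vg, Gg.Adj a b → fr a ≤ fr u → fr b ≤ fr u →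
    gc (fr u) a = gc (fr u) b := by decide
lemma D3 : ∀ u v : Vg, u ≠ v → fr u = fr v → gc (fr u) u ≠ gc (fr u) v := by decide

lemma walk_g {u v : Vg} (p : Gg.Walk u v) (c : ℕ)
    (hs : ∀ w ∈ p.support, fr w ≤ c)
    (hadj : ∀ a b : Vg, Gg.Adj a b → fr a ≤ c → fr b ≤ c → gc c a = gc c b) :
    gc c u = gc c v := by
  induction p with
  | nil => rfl
  | @cons a b w h q ih =>
    have ha : fr a ≤ c := hs a (by simp [Walk.support_cons])
    have hb : fr b ≤ c := hs b (by simp [Walk.support_cons, Walk.start_mem_support])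
    have h1 : gc c a = gc c b := hadj a b h ha hb
    have h2 : gc c b = gc c w := ih (fun x hx => hs x (by simp [Walk.support_cons]; right; exact hx))
    exact h1.trans h2

lemma ub : IsRanking Gg 8 fr := by
  refine ⟨D1, fun u v hne heq p _ => ?_⟩
  by_contra hcon
  push_neg at hcon
  have hle : ∀ w ∈ p.support, fr w ≤ (fr u) := fun w hw => not_lt.1 (by
    intro hlt; exact absurd hlt (not_lt.2 (hcon w hw)))
  have hg := walk_g p (fr u) hle (D2 u)
  exact D3 u v hne heq hg

theorem rank_grid_4_5 : rankNumber (gridGraph 4 5) = 8 := by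
  have hub : 8 ∈ {k | ∃ f : Vg → ℕ, IsRanking (gridGraph 4 5) k f} := ⟨fr, ub⟩
  have hlb : ∀ k ∈ {k | ∃ f : Vg → ℕ, IsRanking (gridGraph 4 5) k f}, 8 ≤ k := by
    rintro k ⟨f, hf⟩
    obtain ⟨v, -, h8⟩ := hard_univ k f hf
    exact le_trans h8 (hf.1 v).2
  rw [rankNumber]
  exact le_antisymm (Nat.sInf_le hub) (le_csInf ⟨8, hub⟩ hlb)
end

section
/- For m ≤ n, the rank number of the m×n grid graph satisfies χ_r(G_{m,n}) ≤ m + χ_r(G_{m,⌈(n−1)/2⌉}). -/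
open SimpleGraph

/-- Structure of grid adjacency in coordinates. -/
lemma grid_adj_iff {m n : ℕ} {u v : Fin m × Fin n} :
    (gridGraph m n).Adj u v ↔
      (((u.1 : ℕ) + 1 = v.1 ∨ (v.1 : ℕ) + 1 = u.1) ∧ u.2 = v.2) ∨
      (((u.2 : ℕ) + 1 = v.2 ∨ (v.2 : ℕ) + 1 = u.2) ∧ u.1 = v.1) := by
  rw [gridGraph, boxProd_adj, pathGraph_adj, pathGraph_adj]

/-- Column coordinates of adjacent vertices differ by at most one. -/
lemma grid_adj_col {m n : ℕ} {u v : Fin m × Fin n} (h : (gridGraph m n).Adj u v) :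
    (v.2 : ℕ) ≤ (u.2 : ℕ) + 1 ∧ (u.2 : ℕ) ≤ (v.2 : ℕ) + 1 := by
  rw [grid_adj_iff] at h
  rcases h with ⟨_, h2⟩ | ⟨h2, _⟩
  · rw [h2]; omega
  · omega

/-- Intermediate value for columns along a walk. -/
lemma grid_ivt {m n c : ℕ} {u v : Fin m × Fin n} (p : (gridGraph m n).Walk u v) :
    (u.2 : ℕ) ≤ c → c ≤ (v.2 : ℕ) → ∃ w ∈ p.support, (w.2 : ℕ) = c := by
  induction p with
  | nil => intro h1 h2; exact ⟨_, by simp, le_antisymm h1 h2⟩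
  | @cons a b _ h p ih =>
    intro h1 h2
    by_cases hc : (a.2 : ℕ) = c
    · exact ⟨a, by simp, hc⟩
    · have hb : (b.2 : ℕ) ≤ c := by
        have := grid_adj_col h; omega
      obtain ⟨w, hw, hwc⟩ := ih hb h2
      exact ⟨w, by simp [Walk.support_cons, hw], hwc⟩

/-- If a walk starts below column `c` and never touches column `c`,
it stays below column `c`. -/
lemma grid_below {m n c : ℕ} {u v : Fin m × Fin n} (p : (gridGraph m n).Walk u v) :
    (u.2 : ℕ) < c → (∀ w ∈ p.support, (w.2 : ℕ) ≠ c) →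
    ∀ w ∈ p.support, (w.2 : ℕ) < c := by
  induction p with
  | nil => intro h1 _ w hw; simp at hw; subst hw; exact h1
  | @cons a b _ h p ih =>
    intro h1 hne w hw
    have hb : (b.2 : ℕ) < c := by
      have := grid_adj_col h
      have := hne b (by simp [Walk.support_cons])
      omega
    rw [Walk.support_cons] at hw
    rcases List.mem_cons.1 hw with rfl | hw
    · exact h1
    · exact ih hb (fun x hx => hne x (by simp [Walk.support_cons, hx])) w hw

/-- If a walk starts above column `c` and never touches column `c`,
it stays above column `c`. -/
lemma grid_above {m n c : ℕ} {u v : Fin m × Fin n} (p : (gridGraph m n).Walk u v) :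
    c < (u.2 : ℕ) → (∀ w ∈ p.support, (w.2 : ℕ) ≠ c) →
    ∀ w ∈ p.support, c < (w.2 : ℕ) := by
  induction p with
  | nil => intro h1 _ w hw; simp at hw; subst hw; exact h1
  | @cons a b _ h p ih =>
    intro h1 hne w hw
    have hb : c < (b.2 : ℕ) := by
      have := grid_adj_col h
      have := hne b (by simp [Walk.support_cons])
      omega
    rw [Walk.support_cons] at hw
    rcases List.mem_cons.1 hw with rfl | hw
    · exact h1
    · exact ih hb (fun x hx => hne x (by simp [Walk.support_cons, hx])) w hw

/-- Projection of a strip of the grid onto a smaller grid. -/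
def stripMap {m n : ℕ} (n' o : ℕ) (hn' : 0 < n') (v : Fin m × Fin n) : Fin m × Fin n' :=
  (v.1, ⟨((v.2 : ℕ) - o) % n', Nat.mod_lt _ hn'⟩)

lemma strip_adj {m n n' o : ℕ} (hn' : 0 < n') {a b : Fin m × Fin n}
    (ha : o ≤ (a.2 : ℕ) ∧ (a.2 : ℕ) < o + n') (hb : o ≤ (b.2 : ℕ) ∧ (b.2 : ℕ) < o + n')
    (h : (gridGraph m n).Adj a b) :
    (gridGraph m n').Adj (stripMap n' o hn' a) (stripMap n' o hn' b) := by
  rw [grid_adj_iff] at h ⊢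
  have e1 : ((a.2 : ℕ) - o) % n' = (a.2 : ℕ) - o := Nat.mod_eq_of_lt (by omega)
  have e2 : ((b.2 : ℕ) - o) % n' = (b.2 : ℕ) - o := Nat.mod_eq_of_lt (by omega)
  rcases h with ⟨h1, h2⟩ | ⟨h1, h2⟩
  · left
    refine ⟨h1, ?_⟩
    apply Fin.ext
    simp only [stripMap]
    rw [h2]
  · right
    constructor
    · simp only [stripMap, e1, e2]
      omega
    · simpa [stripMap] using h2

/-- A walk staying inside the strip of columns `[o, o + n')` projects to a walk
in the `m × n'` grid. -/
lemma grid_pullback {m n n' o : ℕ} (hn' : 0 < n') {u v : Fin m × Fin n}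
    (p : (gridGraph m n).Walk u v)
    (hs : ∀ w ∈ p.support, o ≤ (w.2 : ℕ) ∧ (w.2 : ℕ) < o + n') :
    ∃ q : (gridGraph m n').Walk (stripMap n' o hn' u) (stripMap n' o hn' v),
      ∀ w' ∈ q.support, ∃ w ∈ p.support, w' = stripMap n' o hn' w := by
  induction p with
  | nil =>
    refine ⟨Walk.nil, fun w' hw' => ?_⟩
    simp at hw'
    exact ⟨_, by simp, hw'⟩
  | @cons a b _ h p ih =>
    have ha := hs a (by simp)
    have hb := hs b (by simp [Walk.support_cons])
    obtain ⟨q, hq⟩ := ih (fun w hw => hs w (by simp [Walk.support_cons, hw]))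
    refine ⟨Walk.cons (strip_adj hn' ha hb h) q, ?_⟩
    intro w' hw'
    rw [Walk.support_cons] at hw'
    rcases List.mem_cons.1 hw' with rfl | hw'
    · exact ⟨a, by simp, rfl⟩
    · obtain ⟨w, hw, hww⟩ := hq w' hw'
      exact ⟨w, by simp [Walk.support_cons, hw], hww⟩

/-- Every grid admits some ranking (using all-distinct labels). -/
lemma grid_ranking_nonempty (m n : ℕ) :
    {k | ∃ f : Fin m × Fin n → ℕ, IsRanking (gridGraph m n) k f}.Nonempty := by
  refine ⟨m * n, fun v => (finProdFinEquiv (v.2, v.1) : Fin (n * m)) + 1, ?_, ?_⟩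
  · intro v
    have h := (finProdFinEquiv (v.2, v.1) : Fin (n * m)).2
    constructor
    · exact Nat.le_add_left 1 _
    · dsimp only
      rw [Nat.mul_comm m n]
      omega
  · intro u v huv hf p _
    exfalso
    apply huv
    have hfe : ((finProdFinEquiv (u.2, u.1) : Fin (n * m)) : ℕ) + 1
        = ((finProdFinEquiv (v.2, v.1) : Fin (n * m)) : ℕ) + 1 := hf
    have : (u.2, u.1) = (v.2, v.1) :=
      finProdFinEquiv.injective (Fin.ext (by omega))
    have h1 : u.2 = v.2 := congrArg Prod.fst this
    have h2 : u.1 = v.1 := congrArg Prod.snd this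
    exact Prod.ext h2 h1

/-- The ranking of the big grid assembled from a middle column and two copies of
a ranking of the half grid. -/
def assembled {m n : ℕ} (n' c k : ℕ) (hn' : 0 < n') (f : Fin m × Fin n' → ℕ)
    (v : Fin m × Fin n) : ℕ :=
  if (v.2 : ℕ) < c then f (stripMap n' 0 hn' v)
  else if (v.2 : ℕ) = c then k + 1 + (v.1 : ℕ)
  else f (stripMap n' (c + 1) hn' v)

theorem rank_grid_upper (m n : ℕ) (hmn : m ≤ n) :
    rankNumber (gridGraph m n) ≤ m + rankNumber (gridGraph m ((n - 1 + 1) / 2)) := by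
  -- trivial case : n = 0
  rcases Nat.eq_zero_or_pos n with rfl | hn
  · have h0 : (0 : ℕ) ∈ {k | ∃ f : Fin m × Fin 0 → ℕ, IsRanking (gridGraph m 0) k f} :=
      ⟨fun _ => 0, fun v => v.2.elim0, fun u => by exact u.2.elim0⟩
    calc rankNumber (gridGraph m 0) ≤ 0 := Nat.sInf_le h0
    _ ≤ _ := Nat.zero_le _
  have hn1 : n - 1 + 1 = n := Nat.succ_pred_eq_of_pos hn
  rw [hn1]
  -- case n = 1
  rcases eq_or_lt_of_le (Nat.succ_le_of_lt hn) with hn1' | hn2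
  · have hmem : m ∈ {k | ∃ f : Fin m × Fin n → ℕ, IsRanking (gridGraph m n) k f} := by
      refine ⟨fun v => 1 + (v.1 : ℕ), fun v => ?_, ?_⟩
      · have := v.1.2
        dsimp only
        omega
      intro u v huv hf p _
      exfalso
      apply huv
      have h1 : (u.1 : ℕ) = (v.1 : ℕ) := by
        have : 1 + (u.1 : ℕ) = 1 + (v.1 : ℕ) := hf
        omega
      have h2 : (u.2 : ℕ) = (v.2 : ℕ) := by
        have := u.2.2; have := v.2.2; omega
      exact Prod.ext (Fin.ext h1) (Fin.ext h2)
    calc rankNumber (gridGraph m n) ≤ m := Nat.sInf_le hmem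
    _ ≤ _ := Nat.le_add_right _ _
  -- main case : n ≥ 2
  set n' : ℕ := n / 2 with hn'def
  have hn' : 0 < n' := by omega
  set c : ℕ := n / 2 with hcdef
  set k : ℕ := rankNumber (gridGraph m n') with hkdef
  obtain ⟨f, hfb, hfr⟩ : ∃ f, IsRanking (gridGraph m n') k f :=
    Nat.sInf_mem (grid_ranking_nonempty m n')
  have hfub : ∀ w, f w ≤ k := fun w => (hfb w).2
  set g : Fin m × Fin n → ℕ := assembled n' c k hn' f with hgdef
  -- values of g on the three regions
  have hg_lt : ∀ v : Fin m × Fin n, (v.2 : ℕ) < c → g v = f (stripMap n' 0 hn' v) := by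
    intro v hv; simp [hgdef, assembled, hv]
  have hg_eq : ∀ v : Fin m × Fin n, (v.2 : ℕ) = c → g v = k + 1 + (v.1 : ℕ) := by
    intro v hv; simp [hgdef, assembled, hv]
  have hg_gt : ∀ v : Fin m × Fin n, c < (v.2 : ℕ) → g v = f (stripMap n' (c + 1) hn' v) := by
    intro v hv
    have h1 : ¬ (v.2 : ℕ) < c := by omega
    have h2 : ¬ (v.2 : ℕ) = c := by omega
    simp [hgdef, assembled, h1, h2]
  have hg_side : ∀ v : Fin m × Fin n, (v.2 : ℕ) ≠ c → g v ≤ k := by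
    intro v hv
    rcases lt_or_gt_of_ne hv with h | h
    · rw [hg_lt v h]; exact hfub _
    · rw [hg_gt v h]; exact hfub _
  have hmem : m + k ∈ {j | ∃ f : Fin m × Fin n → ℕ, IsRanking (gridGraph m n) j f} := by
    refine ⟨g, ?_, ?_⟩
    · -- bounds
      intro v
      by_cases h1 : (v.2 : ℕ) < c
      · rw [hg_lt v h1]
        exact ⟨(hfb _).1, le_trans (hfub _) (Nat.le_add_left _ _)⟩
      by_cases h2 : (v.2 : ℕ) = c
      · rw [hg_eq v h2]
        have := v.1.2
        omega
      · rw [hg_gt v (by omega)]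
        exact ⟨(hfb _).1, le_trans (hfub _) (Nat.le_add_left _ _)⟩
    · intro u v huv hguv p hp
      -- middle-column endpoints are impossible
      by_cases hu : (u.2 : ℕ) = c
      · exfalso
        by_cases hv : (v.2 : ℕ) = c
        · apply huv
          have h1 : k + 1 + (u.1 : ℕ) = k + 1 + (v.1 : ℕ) := by
            rw [← hg_eq u hu, ← hg_eq v hv]; exact hguv
          exact Prod.ext (Fin.ext (by omega)) (Fin.ext (by omega))
        · have h1 := hg_eq u hu
          have h2 := hg_side v hv
          omega
      by_cases hv : (v.2 : ℕ) = c
      · exfalso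
        have h1 := hg_eq v hv
        have h2 := hg_side u hu
        omega
      -- does the path touch the middle column?
      by_cases hex : ∃ w ∈ p.support, (w.2 : ℕ) = c
      · obtain ⟨w, hw, hwc⟩ := hex
        refine ⟨w, hw, ?_⟩
        rw [hg_eq w hwc]
        have := hg_side u hu
        omega
      push_neg at hex
      -- the two endpoints must be on the same side
      rcases lt_or_gt_of_ne hu with hu' | hu' <;> rcases lt_or_gt_of_ne hv with hv' | hv'
      · -- both left of the middle column
        have hall := grid_below p hu' hex
        have hsup : ∀ w ∈ p.support, 0 ≤ (w.2 : ℕ) ∧ (w.2 : ℕ) < 0 + n' := by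
          intro w hw; exact ⟨Nat.zero_le _, by have := hall w hw; omega⟩
        obtain ⟨q, hq⟩ := grid_pullback hn' p hsup
        have hne' : stripMap n' 0 hn' u ≠ stripMap n' 0 hn' v := by
          intro hh
          apply huv
          have hr : u.1 = v.1 := by
            have := congrArg Prod.fst hh
            simpa [stripMap] using this
          have hc2 : (((u.2 : ℕ) - 0) % n' : ℕ) = ((v.2 : ℕ) - 0) % n' := by
            have := congrArg (fun x : Fin m × Fin n' => (x.2 : ℕ)) hh
            simpa [stripMap] using this
          rw [Nat.mod_eq_of_lt (by omega), Nat.mod_eq_of_lt (by omega)] at hc2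
          exact Prod.ext hr (Fin.ext (by omega))
        have hfe : f (stripMap n' 0 hn' u) = f (stripMap n' 0 hn' v) := by
          rw [← hg_lt u hu', ← hg_lt v hv']; exact hguv
        obtain ⟨w', hw', hlt⟩ := hfr _ _ hne' hfe (q.toPath : (gridGraph m n').Walk _ _)
          q.toPath.2
        obtain ⟨w, hw, rfl⟩ := hq w' (Walk.support_toPath_subset q hw')
        refine ⟨w, hw, ?_⟩
        rw [hg_lt u hu', hg_lt w (hall w hw)]
        exact hlt
      · -- opposite sides: the path must cross the middle column
        exfalso
        obtain ⟨w, hw, hwc⟩ := grid_ivt p (le_of_lt hu') (le_of_lt hv')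
        exact hex w hw hwc
      · -- opposite sides (other direction)
        exfalso
        obtain ⟨w, hw, hwc⟩ := grid_ivt p.reverse (le_of_lt hv') (le_of_lt hu')
        rw [Walk.support_reverse, List.mem_reverse] at hw
        exact hex w hw hwc
      · -- both right of the middle column
        have hall := grid_above p hu' hex
        have hsup : ∀ w ∈ p.support, c + 1 ≤ (w.2 : ℕ) ∧ (w.2 : ℕ) < (c + 1) + n' := by
          intro w hw
          have h1 := hall w hw
          have h2 : (w.2 : ℕ) < n := w.2.2
          omega
        obtain ⟨q, hq⟩ := grid_pullback hn' p hsup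
        have hne' : stripMap n' (c + 1) hn' u ≠ stripMap n' (c + 1) hn' v := by
          intro hh
          apply huv
          have hr : u.1 = v.1 := by
            have := congrArg Prod.fst hh
            simpa [stripMap] using this
          have hc2 : (((u.2 : ℕ) - (c + 1)) % n' : ℕ) = ((v.2 : ℕ) - (c + 1)) % n' := by
            have := congrArg (fun x : Fin m × Fin n' => (x.2 : ℕ)) hh
            simpa [stripMap] using this
          have hu2 : (u.2 : ℕ) < n := u.2.2
          have hv2 : (v.2 : ℕ) < n := v.2.2
          rw [Nat.mod_eq_of_lt (by omega), Nat.mod_eq_of_lt (by omega)] at hc2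
          exact Prod.ext hr (Fin.ext (by omega))
        have hfe : f (stripMap n' (c + 1) hn' u) = f (stripMap n' (c + 1) hn' v) := by
          rw [← hg_gt u hu', ← hg_gt v hv']; exact hguv
        obtain ⟨w', hw', hlt⟩ := hfr _ _ hne' hfe (q.toPath : (gridGraph m n').Walk _ _)
          q.toPath.2
        obtain ⟨w, hw, rfl⟩ := hq w' (Walk.support_toPath_subset q hw')
        refine ⟨w, hw, ?_⟩
        rw [hg_gt u hu', hg_gt w (hall w hw)]
        exact hlt
  exact Nat.sInf_le hmem
end
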